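/- arXiv:2507.10600 — 6 statements merged into one kernel-verified Lean document; each statement's English description precedes it below -/
import Mathlib

section
/- Five-condition characterization: a ∈ A has an m-generalized right group inverse if and only if there exists b ∈ A such that bab = b, a^2 b^2 = ab, ((a^m)^* a^{m+1} b)^* = (a^m)^* a^{m+1} b, abA = a^2 b A, and a − a^2 b is quasinilpotent. -/
def Quasinilpotent {A : Type*} [NormedRing A] (q : A) : Prop :=
  Filter.Tendsto (fun n : ℕ => ‖q ^ n‖ ^ ((1 : ℝ) / n)) Filter.atTop (nhds 0)

/-- `d` is a generalized right Drazin inverse of `a`. -/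
def IsGRD {A : Type*} [NormedRing A] (a d : A) : Prop :=
  a * d ^ 2 = d ∧ a ^ 2 * d = a * d * a ∧ Quasinilpotent (a - a * d * a)

/-- `x` is an `m`-generalized right group inverse of `a` relative to the
generalized right Drazin inverse `d` of `a`. -/
def IsMGRGI {A : Type*} [NormedRing A] [StarRing A] (m : ℕ) (a d x : A) : Prop :=
  x = a * x ^ 2 ∧ star (a * d) * a ^ (m + 1) * x = star (a * d) * a ^ m ∧
    Filter.Tendsto (fun n : ℕ => ‖a ^ n - a * x * a ^ n‖ ^ ((1 : ℝ) / n))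
      Filter.atTop (nhds 0)

open Filter


lemma pow_small_of_tendsto {c : ℕ → ℝ} (hc : ∀ n, 0 ≤ c n)
    (h : Tendsto (fun n : ℕ => (c n) ^ ((1 : ℝ) / n)) atTop (nhds 0)) :
    ∀ ε : ℝ, 0 < ε → ∀ᶠ n in atTop, c n ≤ ε ^ n := by
  intro ε hε
  filter_upwards [h.eventually_lt_const hε, eventually_ge_atTop 1] with n hn hn1
  have hn0 : (n : ℝ) ≠ 0 := by positivity
  have key : ((c n) ^ ((1 : ℝ) / n)) ^ n = c n := by
    rw [← Real.rpow_natCast ((c n) ^ ((1 : ℝ) / n)) n, ← Real.rpow_mul (hc n),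
      one_div_mul_cancel hn0, Real.rpow_one]
  calc c n = ((c n) ^ ((1 : ℝ) / n)) ^ n := key.symm
    _ ≤ ε ^ n := pow_le_pow_left₀ (Real.rpow_nonneg (hc n) _) hn.le n

lemma tendsto_of_pow_small {c : ℕ → ℝ} (hc : ∀ n, 0 ≤ c n)
    (h : ∀ ε : ℝ, 0 < ε → ∀ᶠ n in atTop, c n ≤ ε ^ n) :
    Tendsto (fun n : ℕ => (c n) ^ ((1 : ℝ) / n)) atTop (nhds 0) := by
  rw [Metric.tendsto_atTop]
  intro ε hε
  have h2 := h (ε / 2) (by positivity)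
  rw [eventually_atTop] at h2
  obtain ⟨N, hN⟩ := h2
  refine ⟨max N 1, fun n hn => ?_⟩
  have hn1 : 1 ≤ n := le_trans (le_max_right N 1) hn
  have hnN : N ≤ n := le_trans (le_max_left N 1) hn
  have hn0 : (n : ℝ) ≠ 0 := by positivity
  have key : ((ε / 2 : ℝ) ^ n) ^ ((1 : ℝ) / n) = ε / 2 := by
    rw [← Real.rpow_natCast (ε / 2) n, ← Real.rpow_mul (by positivity),
      mul_one_div_cancel hn0, Real.rpow_one]
  have : (c n) ^ ((1 : ℝ) / n) ≤ ε / 2 := by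
    rw [← key]
    exact Real.rpow_le_rpow (hc n) (hN n hnN) (by positivity)
  have h0 : 0 ≤ (c n) ^ ((1 : ℝ) / n) := Real.rpow_nonneg (hc n) _
  rw [Real.dist_eq, sub_zero, abs_of_nonneg h0]
  linarith

lemma small_transfer {c v : ℕ → ℝ} (C : ℝ) (hC : 0 ≤ C)
    (hc : ∀ ε : ℝ, 0 < ε → ∀ᶠ n in atTop, c n ≤ ε ^ n)
    (h : ∀ᶠ n in atTop, v n ≤ C * c n) :
    ∀ ε : ℝ, 0 < ε → ∀ᶠ n in atTop, v n ≤ ε ^ n := by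
  intro ε hε
  set δ := ε / (C + 1) with hδdef
  have hδ : 0 < δ := by positivity
  have hδε : δ ≤ ε := by
    rw [hδdef, div_le_iff₀ (by linarith)]; nlinarith
  have hCδ : C * δ ≤ ε := by
    rw [hδdef, mul_comm, div_mul_eq_mul_div, div_le_iff₀ (by linarith : (0:ℝ) < C + 1)]
    nlinarith
  filter_upwards [hc δ hδ, h, eventually_ge_atTop 1] with n h1 h2 h3
  obtain ⟨k, rfl⟩ : ∃ k, n = k + 1 := ⟨n - 1, by omega⟩
  have : C * c (k+1) ≤ C * δ ^ (k+1) :=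
    mul_le_mul_of_nonneg_left h1 hC
  calc v (k+1) ≤ C * δ ^ (k+1) := le_trans h2 this
    _ = (C * δ) * δ ^ k := by ring
    _ ≤ ε * ε ^ k := by
        apply mul_le_mul hCδ (pow_le_pow_left₀ hδ.le hδε k) (by positivity) hε.le
    _ = ε ^ (k+1) := by ring

lemma small_transfer_shift {c v : ℕ → ℝ} (C : ℝ) (hC : 0 ≤ C)
    (hc : ∀ ε : ℝ, 0 < ε → ∀ᶠ n in atTop, c n ≤ ε ^ n)
    (h : ∀ᶠ n in atTop, v (n + 1) ≤ C * c n) :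
    ∀ ε : ℝ, 0 < ε → ∀ᶠ n in atTop, v n ≤ ε ^ n := by
  intro ε hε
  set δ := min ε (ε * ε / (C + 1)) with hδdef
  have hδ : 0 < δ := by
    apply lt_min hε; positivity
  have hδε : δ ≤ ε := min_le_left _ _
  have hCδ : C * δ ≤ ε * ε := by
    calc C * δ ≤ C * (ε * ε / (C+1)) :=
          mul_le_mul_of_nonneg_left (min_le_right _ _) hC
      _ ≤ (C+1) * (ε * ε / (C+1)) := by
          apply mul_le_mul_of_nonneg_right (by linarith) (by positivity)
      _ = ε * ε := by field_simp
  have key : ∀ᶠ k in atTop, v (k + 1) ≤ ε ^ (k + 1) := by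
    filter_upwards [hc δ hδ, h, eventually_ge_atTop 1] with k h1 h2 h3
    obtain ⟨j, rfl⟩ : ∃ j, k = j + 1 := ⟨k - 1, by omega⟩
    calc v (j+1+1) ≤ C * c (j+1) := h2
      _ ≤ C * δ ^ (j+1) := mul_le_mul_of_nonneg_left h1 hC
      _ = (C * δ) * δ ^ j := by ring
      _ ≤ (ε * ε) * ε ^ j := by
          apply mul_le_mul hCδ (pow_le_pow_left₀ hδ.le hδε j) (by positivity)
          positivity
      _ = ε ^ (j+1+1) := by ring
  rw [eventually_atTop] at key ⊢
  obtain ⟨N, hN⟩ := key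
  refine ⟨N + 1, fun n hn => ?_⟩
  obtain ⟨k, rfl⟩ : ∃ k, n = k + 1 := ⟨n - 1, by omega⟩
  exact hN k (by omega)

lemma eq_zero_of_small {A : Type*} [NormedRing A] {c : ℕ → ℝ}
    (hc : ∀ ε : ℝ, 0 < ε → ∀ᶠ n in atTop, c n ≤ ε ^ n)
    {z : A} (K : ℝ) (hK : 0 ≤ K)
    (h : ∀ᶠ n in atTop, ‖z‖ ≤ c n * K ^ n) : z = 0 := by
  have hε : (0:ℝ) < 1 / (K + 1) := by positivity
  set r := (1 / (K + 1)) * K with hrdef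
  have hr0 : 0 ≤ r := by positivity
  have hr1 : r < 1 := by
    rw [hrdef, div_mul_eq_mul_div, div_lt_one (by positivity)]
    linarith
  have hbound : ∀ᶠ n in atTop, ‖z‖ ≤ r ^ n := by
    filter_upwards [hc _ hε, h] with n h1 h2
    calc ‖z‖ ≤ c n * K ^ n := h2
      _ ≤ (1 / (K + 1)) ^ n * K ^ n := by
          apply mul_le_mul_of_nonneg_right h1 (by positivity)
      _ = r ^ n := by rw [hrdef, mul_pow]
  have htend : Tendsto (fun n : ℕ => r ^ n) atTop (nhds 0) :=
    tendsto_pow_atTop_nhds_zero_of_lt_one hr0 hr1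
  have : ‖z‖ ≤ 0 := ge_of_tendsto htend hbound
  exact norm_le_zero_iff.mp this

lemma mul_pow_mul_aux {A : Type*} [Ring A] (u v : A) (n : ℕ) :
    (u * v) ^ (n + 1) = u * ((v * u) ^ n * v) := by
  induction n with
  | zero => simp
  | succ n ih =>
    rw [pow_succ, ih, pow_succ]
    simp only [mul_assoc]

lemma forward_dir {A : Type*} [NormedRing A] [StarRing A] (a d x : A) (m : ℕ)
    (hd1 : a * d ^ 2 = d) (hd2 : a ^ 2 * d = a * d * a)
    (hd3 : Quasinilpotent (a - a * d * a))
    (hx1 : x = a * x ^ 2)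
    (hx2 : star (a * d) * a ^ (m + 1) * x = star (a * d) * a ^ m)
    (hx3 : Tendsto (fun n : ℕ => ‖a ^ n - a * x * a ^ n‖ ^ ((1 : ℝ) / n))
      atTop (nhds 0)) :
    ∃ b : A, b * a * b = b ∧ a ^ 2 * b ^ 2 = a * b ∧
      star (star (a ^ m) * a ^ (m + 1) * b) = star (a ^ m) * a ^ (m + 1) * b ∧
      (Set.range fun r : A => a * b * r) = (Set.range fun r : A => a ^ 2 * b * r) ∧
      Quasinilpotent (a - a ^ 2 * b) := by
  obtain ⟨e, he⟩ : ∃ t : A, t = a * d := ⟨_, rfl⟩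
  obtain ⟨q, hq⟩ : ∃ t : A, t = a * x := ⟨_, rfl⟩
  have hd1' : a * (d * d) = d := by rw [sq] at hd1; exact hd1
  have hax2 : a * (x * x) = x := by rw [sq] at hx1; exact hx1.symm
  have hd2' : a * e = e * a := by
    rw [he]
    calc a * (a * d) = a ^ 2 * d := by rw [sq, mul_assoc]
      _ = (a * d) * a := hd2
  have hee : e * e = e := by
    rw [he]
    calc (a * d) * (a * d) = ((a * d) * a) * d := by noncomm_ring
      _ = (a ^ 2 * d) * d := by rw [hd2]
      _ = a * (a * (d * d)) := by rw [sq]; noncomm_ring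
      _ = a * d := by rw [hd1']
  have heapow : ∀ n : ℕ, a ^ n * e = e * a ^ n := by
    intro n
    induction n with
    | zero => simp
    | succ n ih =>
      calc a ^ (n+1) * e = a ^ n * (a * e) := by rw [pow_succ, mul_assoc]
        _ = a ^ n * (e * a) := by rw [hd2']
        _ = (a ^ n * e) * a := by rw [mul_assoc]
        _ = e * (a ^ n * a) := by rw [ih, mul_assoc]
        _ = e * a ^ (n+1) := by rw [← pow_succ]
  have hedn : ∀ n : ℕ, a ^ (n+1) * d ^ (n+1) = e := by
    intro n
    induction n with
    | zero => simp [he, ← mul_assoc]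
    | succ n ih =>
      have hdpow : d ^ (n+2) = d * d * d ^ n := by
        rw [show n + 2 = 2 + n by omega, pow_add, sq]
      calc a ^ (n+2) * d ^ (n+2) = (a ^ (n+1) * a) * (d * d * d ^ n) := by
            rw [pow_succ, hdpow]
        _ = a ^ (n+1) * (a * (d * d) * d ^ n) := by simp only [mul_assoc]
        _ = a ^ (n+1) * (d * d ^ n) := by rw [hd1']
        _ = a ^ (n+1) * d ^ (n+1) := by rw [← pow_succ']
        _ = e := ih
  have hqxn : ∀ n : ℕ, a ^ (n+1) * x ^ (n+1) = q := by
    intro n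
    induction n with
    | zero => simp [hq, ← mul_assoc]
    | succ n ih =>
      have hxpow : x ^ (n+2) = x * x * x ^ n := by
        rw [show n + 2 = 2 + n by omega, pow_add, sq]
      calc a ^ (n+2) * x ^ (n+2) = (a ^ (n+1) * a) * (x * x * x ^ n) := by
            rw [pow_succ, hxpow]
        _ = a ^ (n+1) * (a * (x * x) * x ^ n) := by simp only [mul_assoc]
        _ = a ^ (n+1) * (x * x ^ n) := by rw [hax2]
        _ = a ^ (n+1) * x ^ (n+1) := by rw [← pow_succ']
        _ = q := ih
  have hqx : q * x = x := by
    rw [hq, mul_assoc]; exact hax2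
  have hv0eq : a - a * d * a = a - e * a := by rw [he, mul_assoc]
  have he_v : ∀ n : ℕ, (a - e * a) ^ (n+1) = a ^ (n+1) - e * a ^ (n+1) := by
    intro n
    induction n with
    | zero => simp
    | succ n ih =>
      have h1 : a ^ (n+1) * (e * a) = e * a ^ (n+2) := by
        rw [← mul_assoc, heapow, mul_assoc, ← pow_succ]
      have h2 : e * a ^ (n+1) * a = e * a ^ (n+2) := by
        rw [mul_assoc, ← pow_succ]
      have h3 : e * a ^ (n+1) * (e * a) = e * a ^ (n+2) := by
        rw [mul_assoc, h1, ← mul_assoc, hee]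
      calc (a - e * a) ^ (n+2) = (a ^ (n+1) - e * a ^ (n+1)) * (a - e * a) := by
            rw [pow_succ, ih]
        _ = a ^ (n+1) * a - a ^ (n+1) * (e * a) - (e * a ^ (n+1) * a
              - e * a ^ (n+1) * (e * a)) := by noncomm_ring
        _ = a ^ (n+2) - e * a ^ (n+2) - (e * a ^ (n+2) - e * a ^ (n+2)) := by
            rw [h1, h2, h3, ← pow_succ]
        _ = a ^ (n+2) - e * a ^ (n+2) := by abel
  -- analytic smallness facts
  have smallv0 : ∀ ε : ℝ, 0 < ε → ∀ᶠ n in atTop, ‖(a - e * a) ^ n‖ ≤ ε ^ n := by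
    apply pow_small_of_tendsto (fun n => norm_nonneg _)
    rw [← hv0eq]; exact hd3
  have smallc : ∀ ε : ℝ, 0 < ε → ∀ᶠ n in atTop, ‖a ^ n - q * a ^ n‖ ≤ ε ^ n := by
    apply pow_small_of_tendsto (fun n => norm_nonneg _)
    have : ∀ n : ℕ, a ^ n - q * a ^ n = a ^ n - a * x * a ^ n := by
      intro n; rw [hq]
    simpa only [this] using hx3
  -- q*e = e
  have hqe : q * e = e := by
    have hz : e - q * e = 0 := by
      apply eq_zero_of_small smallc ‖d‖ (norm_nonneg d)
      filter_upwards [eventually_ge_atTop 1] with n hn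
      obtain ⟨k, rfl⟩ : ∃ k, n = k + 1 := ⟨n - 1, by omega⟩
      have key : e - q * e = (a ^ (k+1) - q * a ^ (k+1)) * d ^ (k+1) := by
        rw [sub_mul, mul_assoc, hedn]
      rw [key]
      calc ‖(a ^ (k+1) - q * a ^ (k+1)) * d ^ (k+1)‖
          ≤ ‖a ^ (k+1) - q * a ^ (k+1)‖ * ‖d ^ (k+1)‖ := norm_mul_le _ _
        _ ≤ ‖a ^ (k+1) - q * a ^ (k+1)‖ * ‖d‖ ^ (k+1) := by
            apply mul_le_mul_of_nonneg_left (norm_pow_le' d (by omega)) (norm_nonneg _)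
    exact (sub_eq_zero.mp hz).symm
  -- e*q = q
  have heq : e * q = q := by
    have hz : q - e * q = 0 := by
      apply eq_zero_of_small smallv0 ‖x‖ (norm_nonneg x)
      filter_upwards [eventually_ge_atTop 1] with n hn
      obtain ⟨k, rfl⟩ : ∃ k, n = k + 1 := ⟨n - 1, by omega⟩
      have key : q - e * q = (a - e * a) ^ (k+1) * x ^ (k+1) := by
        rw [he_v, sub_mul, mul_assoc, hqxn]
      rw [key]
      calc ‖(a - e * a) ^ (k+1) * x ^ (k+1)‖
          ≤ ‖(a - e * a) ^ (k+1)‖ * ‖x ^ (k+1)‖ := norm_mul_le _ _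
        _ ≤ ‖(a - e * a) ^ (k+1)‖ * ‖x‖ ^ (k+1) := by
            apply mul_le_mul_of_nonneg_left (norm_pow_le' x (by omega)) (norm_nonneg _)
    exact (sub_eq_zero.mp hz).symm
  have hqq : q * q = q := by
    calc q * q = q * (e * q) := by rw [heq]
      _ = (q * e) * q := by rw [mul_assoc]
      _ = e * q := by rw [hqe]
      _ = q := heq
  have heaq : e * (a * q) = a * q := by
    calc e * (a * q) = (e * a) * q := by rw [mul_assoc]
      _ = (a * e) * q := by rw [hd2']
      _ = a * (e * q) := by rw [mul_assoc]
      _ = a * q := by rw [heq]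
  have hqaq : q * (a * q) = a * q := by
    calc q * (a * q) = q * (e * (a * q)) := by rw [heaq]
      _ = (q * e) * (a * q) := by rw [mul_assoc]
      _ = e * (a * q) := by rw [hqe]
      _ = a * q := heaq
  -- the witness
  refine ⟨x * q, ?_, ?_, ?_, ?_, ?_⟩
  · -- b * a * b = b
    have hab : a * (x * q) = q := by
      rw [← mul_assoc, ← hq, hqq]
    calc (x * q) * a * (x * q) = (x * q) * (a * (x * q)) := by rw [mul_assoc]
      _ = (x * q) * q := by rw [hab]
      _ = x * (q * q) := by rw [mul_assoc]
      _ = x * q := by rw [hqq]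
  · -- a^2 b^2 = a b
    have hab : a * (x * q) = q := by rw [← mul_assoc, ← hq, hqq]
    calc a ^ 2 * (x * q) ^ 2 = a * ((a * (x * q)) * (x * q)) := by
          rw [sq, sq]; noncomm_ring
      _ = a * (q * (x * q)) := by rw [hab]
      _ = a * ((q * x) * q) := by rw [mul_assoc]
      _ = a * (x * q) := by rw [hqx]
      _ = q := hab
      _ = a * (x * q) := hab.symm
  · -- star condition
    have hab : a * (x * q) = q := by rw [← mul_assoc, ← hq, hqq]
    have hy : a ^ (m+1) * (x * q) = a ^ m * q := by
      calc a ^ (m+1) * (x * q) = a ^ m * (a * (x * q)) := by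
            rw [pow_succ, mul_assoc]
        _ = a ^ m * q := by rw [hab]
    have hx2' : star e * (a ^ m * q) = star e * a ^ m := by
      have h1 : star e * a ^ (m+1) * x = star e * (a ^ m * q) := by
        rw [mul_assoc]
        congr 1
        calc a ^ (m+1) * x = a ^ m * (a * x) := by rw [pow_succ, mul_assoc]
          _ = a ^ m * q := by rw [← hq]
      rw [← h1, he]
      exact hx2
    have hstar1 : star q * (star (a ^ m) * e) = star (a ^ m) * e := by
      have := congrArg star hx2'
      simp only [star_mul, star_star, mul_assoc] at this
      exact this
    have hey : e * (a ^ m * q) = a ^ m * q := by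
      calc e * (a ^ m * q) = (e * a ^ m) * q := by rw [mul_assoc]
        _ = (a ^ m * e) * q := by rw [heapow]
        _ = a ^ m * (e * q) := by rw [mul_assoc]
        _ = a ^ m * q := by rw [heq]
    have hXeq : star (a ^ m) * (a ^ m * q) = star (a ^ m * q) * (a ^ m * q) := by
      calc star (a ^ m) * (a ^ m * q) = star (a ^ m) * (e * (a ^ m * q)) := by
            rw [hey]
        _ = (star (a ^ m) * e) * (a ^ m * q) := by rw [mul_assoc]
        _ = (star q * (star (a ^ m) * e)) * (a ^ m * q) := by rw [hstar1]
        _ = star q * (star (a ^ m) * (e * (a ^ m * q))) := by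
            simp only [mul_assoc]
        _ = star q * (star (a ^ m) * (a ^ m * q)) := by rw [hey]
        _ = star (a ^ m * q) * (a ^ m * q) := by
            rw [star_mul]; simp only [mul_assoc]
    have hgb : star (a ^ m) * a ^ (m+1) * (x * q) = star (a ^ m) * (a ^ m * q) := by
      rw [mul_assoc, hy]
    rw [hgb, hXeq]
    conv_lhs => rw [star_mul, star_star]
  · -- range condition
    have hab : a * (x * q) = q := by rw [← mul_assoc, ← hq, hqq]
    have ha2b : a ^ 2 * (x * q) = a * q := by
      calc a ^ 2 * (x * q) = a * (a * (x * q)) := by rw [sq, mul_assoc]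
        _ = a * q := by rw [hab]
    ext y
    simp only [Set.mem_range]
    constructor
    · rintro ⟨r, hr⟩
      refine ⟨x * r, ?_⟩
      calc a ^ 2 * (x * q) * (x * r) = (a * q) * (x * r) := by rw [ha2b]
        _ = a * ((q * x) * r) := by simp only [mul_assoc]
        _ = a * (x * r) := by rw [hqx]
        _ = (a * x) * r := by rw [mul_assoc]
        _ = q * r := by rw [← hq]
        _ = (a * (x * q)) * r := by rw [hab]
        _ = a * (x * q) * r := rfl
        _ = y := hr
    · rintro ⟨r, hr⟩
      refine ⟨(a * q) * r, ?_⟩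
      calc a * (x * q) * ((a * q) * r) = q * ((a * q) * r) := by rw [hab]
        _ = (q * (a * q)) * r := (mul_assoc _ _ _).symm
        _ = (a * q) * r := by rw [hqaq]
        _ = (a ^ 2 * (x * q)) * r := by rw [ha2b]
        _ = y := hr
  · -- quasinilpotent
    have hab : a * (x * q) = q := by rw [← mul_assoc, ← hq, hqq]
    have ha2b : a ^ 2 * (x * q) = a * q := by
      calc a ^ 2 * (x * q) = a * (a * (x * q)) := by rw [sq, mul_assoc]
        _ = a * q := by rw [hab]
    have hw''q : (a - q * a) * q = 0 := by
      calc (a - q * a) * q = a * q - q * (a * q) := by noncomm_ring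
        _ = a * q - a * q := by rw [hqaq]
        _ = 0 := sub_self _
    have hw''a : ∀ n : ℕ, (a - q * a) ^ (n+1) * a = (a - q * a) ^ (n+2) := by
      intro n
      have hp : (a - q * a) ^ (n+1) * q = 0 := by
        rw [pow_succ, mul_assoc, hw''q, mul_zero]
      calc (a - q * a) ^ (n+1) * a
          = (a - q * a) ^ (n+1) * (q * a + (a - q * a)) := by
            congr 1; abel
        _ = ((a - q * a) ^ (n+1) * q) * a + (a - q * a) ^ (n+1) * (a - q * a) := by
            rw [mul_add, mul_assoc]
        _ = (a - q * a) ^ (n+2) := by rw [hp, zero_mul, zero_add, ← pow_succ]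
    have hcw : ∀ n : ℕ, a ^ (n+1) - q * a ^ (n+1) = (a - q * a) ^ (n+1) := by
      intro n
      induction n with
      | zero => simp
      | succ n ih =>
        calc a ^ (n+1+1) - q * a ^ (n+1+1) = (a ^ (n+1) - q * a ^ (n+1)) * a := by
              rw [sub_mul, mul_assoc, ← pow_succ]
          _ = (a - q * a) ^ (n+1) * a := by rw [ih]
          _ = (a - q * a) ^ (n+2) := hw''a n
    have smallw : ∀ ε : ℝ, 0 < ε → ∀ᶠ n in atTop, ‖(a - q * a) ^ n‖ ≤ ε ^ n := by
      intro ε hε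
      filter_upwards [smallc ε hε, eventually_ge_atTop 1] with n h1 hn
      obtain ⟨k, rfl⟩ : ∃ k, n = k + 1 := ⟨n - 1, by omega⟩
      rw [← hcw k]
      exact h1
    have smallv1 : ∀ ε : ℝ, 0 < ε →
        ∀ᶠ n in atTop, ‖(a - a * q) ^ n‖ ≤ ε ^ n := by
      apply small_transfer_shift (‖a‖ * ‖1 - q‖)
        (mul_nonneg (norm_nonneg _) (norm_nonneg _)) smallw
      apply Eventually.of_forall
      intro n
      have hkey : (a - a * q) ^ (n+1) = a * ((a - q * a) ^ n * (1 - q)) := by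
        have h1 : a - a * q = a * (1 - q) := by noncomm_ring
        have h2 : a - q * a = (1 - q) * a := by noncomm_ring
        rw [h1, h2, mul_pow_mul_aux]
      rw [hkey]
      calc ‖a * ((a - q * a) ^ n * (1 - q))‖
          ≤ ‖a‖ * ‖(a - q * a) ^ n * (1 - q)‖ := norm_mul_le _ _
        _ ≤ ‖a‖ * (‖(a - q * a) ^ n‖ * ‖1 - q‖) := by
            apply mul_le_mul_of_nonneg_left (norm_mul_le _ _) (norm_nonneg _)
        _ = ‖a‖ * ‖1 - q‖ * ‖(a - q * a) ^ n‖ := by ring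
    have : Quasinilpotent (a - a * q) :=
      tendsto_of_pow_small (fun n => norm_nonneg _) smallv1
    have hfin : a - a ^ 2 * (x * q) = a - a * q := by rw [ha2b]
    rw [Quasinilpotent, hfin]
    exact this

lemma backward_dir {A : Type*} [NormedRing A] [StarRing A] [CompleteSpace A]
    (a b : A) (m : ℕ)
    (hbab : b * a * b = b) (hab2 : a ^ 2 * b ^ 2 = a * b)
    (hstar : star (star (a ^ m) * a ^ (m + 1) * b) = star (a ^ m) * a ^ (m + 1) * b)
    (hrange : (Set.range fun r : A => a * b * r) = (Set.range fun r : A => a ^ 2 * b * r))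
    (hqn : Quasinilpotent (a - a ^ 2 * b)) :
    ∃ d x : A, IsGRD a d ∧ IsMGRGI m a d x := by
  obtain ⟨p, hp⟩ : ∃ t : A, t = a * b := ⟨_, rfl⟩
  obtain ⟨x, hxd⟩ : ∃ t : A, t = a * (b * b) := ⟨_, rfl⟩
  have hbab2 : b * (a * b) = b := by rw [← mul_assoc]; exact hbab
  have hpp : p * p = p := by
    rw [hp]
    calc (a * b) * (a * b) = a * (b * (a * b)) := by simp only [mul_assoc]
      _ = a * b := by rw [hbab2]
  have hax : a * x = p := by
    rw [hxd, hp]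
    calc a * (a * (b * b)) = a ^ 2 * b ^ 2 := by rw [sq, sq]; simp only [mul_assoc]
      _ = a * b := hab2
  have hpx : p * x = x := by
    rw [hp, hxd]
    calc (a * b) * (a * (b * b)) = a * ((b * (a * b)) * b) := by
          simp only [mul_assoc]
      _ = a * (b * b) := by rw [hbab2]
  have hxp : x * p = x := by
    rw [hp, hxd]
    calc (a * (b * b)) * (a * b) = a * (b * (b * (a * b))) := by
          simp only [mul_assoc]
      _ = a * (b * b) := by rw [hbab2]
  have hax2 : a * (x * x) = x := by
    rw [← mul_assoc, hax, hpx]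
  -- range consequences
  obtain ⟨t, ht⟩ : ∃ t : A, a ^ 2 * b * t = a * b := by
    have h1 : a * b * 1 ∈ (Set.range fun r : A => a * b * r) := ⟨1, rfl⟩
    rw [hrange] at h1
    obtain ⟨t, ht⟩ := h1
    exact ⟨t, by simpa using ht⟩
  obtain ⟨s₀, hs₀⟩ : ∃ s₀ : A, a * b * s₀ = a ^ 2 * b := by
    have h1 : a ^ 2 * b * 1 ∈ (Set.range fun r : A => a ^ 2 * b * r) := ⟨1, rfl⟩
    rw [← hrange] at h1
    obtain ⟨s₀, hs₀⟩ := h1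
    exact ⟨s₀, by simpa using hs₀⟩
  have hapt : a * (p * t) = p := by
    rw [hp]
    calc a * ((a * b) * t) = a ^ 2 * b * t := by rw [sq]; simp only [mul_assoc]
      _ = a * b := ht
  have hps0 : p * s₀ = a * p := by
    rw [hp]
    calc (a * b) * s₀ = a ^ 2 * b := hs₀
      _ = a * (a * b) := by rw [sq, mul_assoc]
  have hpap : p * (a * p) = a * p := by
    rw [← hps0, ← mul_assoc, hpp]
  have hk : ∀ k : ℕ, a ^ k * (p * t ^ k) = p := by
    intro k
    induction k with
    | zero => simp
    | succ k ih =>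
      calc a ^ (k+1) * (p * t ^ (k+1)) = a ^ k * ((a * (p * t)) * t ^ k) := by
            rw [pow_succ a k, pow_succ' t k]; simp only [mul_assoc]
        _ = a ^ k * (p * t ^ k) := by rw [hapt]
        _ = p := ih
  -- quasinilpotent elements
  obtain ⟨w, hwd⟩ : ∃ t : A, t = a - a * p := ⟨_, rfl⟩
  obtain ⟨w', hw'd⟩ : ∃ t : A, t = a - p * a := ⟨_, rfl⟩
  obtain ⟨u, hud⟩ : ∃ t : A, t = p * a - a * p := ⟨_, rfl⟩
  have smallw : ∀ ε : ℝ, 0 < ε → ∀ᶠ n in atTop, ‖w ^ n‖ ≤ ε ^ n := by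
    apply pow_small_of_tendsto (fun n => norm_nonneg _)
    have heq : a - a ^ 2 * b = w := by
      rw [hwd, hp, sq, mul_assoc]
    rw [← heq]
    exact hqn
  have hw'p : w' * p = 0 := by
    rw [hw'd]
    calc (a - p * a) * p = a * p - p * (a * p) := by noncomm_ring
      _ = 0 := by rw [hpap, sub_self]
  have hw'x : w' * x = 0 := by
    rw [hw'd]
    calc (a - p * a) * x = a * x - p * (a * x) := by noncomm_ring
      _ = p - p * p := by rw [hax]
      _ = 0 := by rw [hpp, sub_self]
  have hw'pow_p : ∀ n : ℕ, w' ^ (n+1) * p = 0 := by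
    intro n; rw [pow_succ, mul_assoc, hw'p, mul_zero]
  have hw'pow_x : ∀ n : ℕ, w' ^ (n+1) * x = 0 := by
    intro n; rw [pow_succ, mul_assoc, hw'x, mul_zero]
  have hw'pow_a : ∀ n : ℕ, w' ^ (n+1) * a = w' ^ (n+2) := by
    intro n
    calc w' ^ (n+1) * a = w' ^ (n+1) * (p * a + (a - p * a)) := by
          congr 1; abel
      _ = (w' ^ (n+1) * p) * a + w' ^ (n+1) * (a - p * a) := by
          rw [mul_add, mul_assoc]
      _ = w' ^ (n+1) * w' := by rw [hw'pow_p, zero_mul, zero_add, ← hw'd]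
      _ = w' ^ (n+2) := by rw [← pow_succ]
  have smallw' : ∀ ε : ℝ, 0 < ε → ∀ᶠ n in atTop, ‖w' ^ n‖ ≤ ε ^ n := by
    apply small_transfer_shift (‖1 - p‖ * ‖a‖)
      (mul_nonneg (norm_nonneg _) (norm_nonneg _)) smallw
    apply Eventually.of_forall
    intro n
    have hkey : w' ^ (n+1) = (1 - p) * (w ^ n * a) := by
      have h1 : w' = (1 - p) * a := by rw [hw'd]; noncomm_ring
      have h2 : w = a * (1 - p) := by rw [hwd]; noncomm_ring
      rw [h1, h2, mul_pow_mul_aux]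
    rw [hkey]
    calc ‖(1 - p) * (w ^ n * a)‖ ≤ ‖1 - p‖ * ‖w ^ n * a‖ := norm_mul_le _ _
      _ ≤ ‖1 - p‖ * (‖w ^ n‖ * ‖a‖) := by
          apply mul_le_mul_of_nonneg_left (norm_mul_le _ _) (norm_nonneg _)
      _ = ‖1 - p‖ * ‖a‖ * ‖w ^ n‖ := by ring
  -- u facts
  have hup : u * p = 0 := by
    rw [hud]
    calc (p * a - a * p) * p = p * (a * p) - a * (p * p) := by noncomm_ring
      _ = a * p - a * p := by rw [hpap, hpp]
      _ = 0 := sub_self _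
  have hpu : p * u = u := by
    rw [hud]
    calc p * (p * a - a * p) = (p * p) * a - p * (a * p) := by noncomm_ring
      _ = p * a - a * p := by rw [hpp, hpap]
  have hux : u * x = 0 := by
    rw [hud]
    have h1 : (p * a - a * p) * x = p * (a * x) - a * (p * x) := by noncomm_ring
    rw [h1, hpx, hax, hpp, sub_self]
  have huw'a : ∀ n : ℕ, (u * w' ^ n) * a = u * w' ^ (n+1) := by
    intro n
    cases n with
    | zero =>
      have h1 : u * w' = u * a := by
        rw [hw'd]
        calc u * (a - p * a) = u * a - (u * p) * a := by noncomm_ring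
          _ = u * a := by rw [hup, zero_mul, sub_zero]
      simp only [pow_zero, mul_one, zero_add, pow_one]
      exact h1.symm
    | succ k =>
      rw [mul_assoc, hw'pow_a]
  -- summability
  have hsum : ∀ k : ℕ, Summable (fun n : ℕ => x ^ (n+k) * (u * w' ^ n)) := by
    intro k
    set ε₀ : ℝ := 1 / (2 * (‖x‖ + 1)) with hε₀d
    have hε₀ : 0 < ε₀ := by positivity
    have hr0 : (0:ℝ) ≤ ‖x‖ * ε₀ := by positivity
    have hr1 : ‖x‖ * ε₀ < 1 := by
      rw [hε₀d, mul_one_div, div_lt_one (by positivity)]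
      nlinarith [norm_nonneg x]
    apply Summable.of_norm_bounded_eventually_nat
      (((summable_geometric_of_lt_one hr0 hr1).mul_left (‖x‖ ^ k * ‖u‖)))
    filter_upwards [smallw' ε₀ hε₀, eventually_ge_atTop 1] with n h1 hn
    calc ‖x ^ (n+k) * (u * w' ^ n)‖ ≤ ‖x ^ (n+k)‖ * ‖u * w' ^ n‖ := norm_mul_le _ _
      _ ≤ ‖x‖ ^ (n+k) * (‖u‖ * ‖w' ^ n‖) := by
          apply mul_le_mul (norm_pow_le' x (by omega)) (norm_mul_le _ _)
            (norm_nonneg _) (by positivity)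
      _ ≤ ‖x‖ ^ (n+k) * (‖u‖ * ε₀ ^ n) := by
          apply mul_le_mul_of_nonneg_left _ (by positivity)
          exact mul_le_mul_of_nonneg_left h1 (norm_nonneg _)
      _ = (‖x‖ ^ k * ‖u‖) * (‖x‖ * ε₀) ^ n := by
          rw [pow_add, mul_pow]; ring
  have hsF : Summable (fun n : ℕ => x ^ (n+2) * (u * w' ^ n)) := hsum 2
  have hsF' : Summable (fun n : ℕ => x ^ (n+1) * (u * w' ^ n)) := hsum 1
  have hsG : Summable (fun n : ℕ => x ^ n * (u * w' ^ n)) := by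
    simpa using hsum 0
  obtain ⟨s, hsd⟩ : ∃ t : A, t = ∑' n : ℕ, x ^ (n+2) * (u * w' ^ n) := ⟨_, rfl⟩
  obtain ⟨s', hs'd⟩ : ∃ t : A, t = ∑' n : ℕ, x ^ (n+1) * (u * w' ^ n) := ⟨_, rfl⟩
  -- power shift facts
  have hax_pow : ∀ k : ℕ, a * x ^ (k+1) = p * x ^ k := by
    intro k; rw [pow_succ' x k, ← mul_assoc, hax]
  have hpx_pow : ∀ k : ℕ, p * x ^ (k+1) = x ^ (k+1) := by
    intro k; rw [pow_succ' x k, ← mul_assoc, hpx]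
  have hax_pow2 : ∀ k : ℕ, a * x ^ (k+2) = x ^ (k+1) := by
    intro k
    calc a * x ^ (k+2) = p * x ^ (k+1) := hax_pow (k+1)
      _ = x ^ (k+1) := hpx_pow k
  -- tsum identities
  have has : a * s = s' := by
    rw [hsd, hs'd, ← Summable.tsum_mul_left a hsF]
    apply tsum_congr
    intro n
    rw [← mul_assoc, hax_pow2]
  have has' : a * s' = ∑' n : ℕ, x ^ n * (u * w' ^ n) := by
    rw [hs'd, ← Summable.tsum_mul_left a hsF']
    apply tsum_congr
    intro n
    rw [← mul_assoc, hax_pow]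
    cases n with
    | zero => simp only [pow_zero, mul_one, one_mul]; exact hpu
    | succ k => rw [hpx_pow]
  have hs'a : s' * a = ∑' n : ℕ, x ^ (n+1) * (u * w' ^ (n+1)) := by
    rw [hs'd, ← Summable.tsum_mul_right a hsF']
    apply tsum_congr
    intro n
    rw [mul_assoc, huw'a]
  have hG_sum : (∑' n : ℕ, x ^ n * (u * w' ^ n))
      = u + ∑' n : ℕ, x ^ (n+1) * (u * w' ^ (n+1)) := by
    have h0 := Summable.tsum_eq_zero_add hsG
    simpa using h0
  have hw's : w' * s = 0 := by
    rw [hsd, ← Summable.tsum_mul_left w' hsF]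
    have hterm : ∀ n : ℕ, w' * (x ^ (n+2) * (u * w' ^ n)) = 0 := by
      intro n
      rw [pow_succ' x (n+1)]
      simp only [← mul_assoc]
      rw [hw'x]
      simp
    simp only [hterm, tsum_zero]
  have hus : u * s = 0 := by
    rw [hsd, ← Summable.tsum_mul_left u hsF]
    have hterm : ∀ n : ℕ, u * (x ^ (n+2) * (u * w' ^ n)) = 0 := by
      intro n
      rw [pow_succ' x (n+1)]
      simp only [← mul_assoc]
      rw [hux]
      simp
    simp only [hterm, tsum_zero]
  have hw's' : w' * s' = 0 := by
    rw [hs'd, ← Summable.tsum_mul_left w' hsF']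
    have hterm : ∀ n : ℕ, w' * (x ^ (n+1) * (u * w' ^ n)) = 0 := by
      intro n
      rw [pow_succ' x n]
      simp only [← mul_assoc]
      rw [hw'x]
      simp
    simp only [hterm, tsum_zero]
  have hw'pow_s' : ∀ n : ℕ, w' ^ (n+1) * s' = 0 := by
    intro n; rw [pow_succ, mul_assoc, hw's', mul_zero]
  have huw'x : ∀ n : ℕ, (u * w' ^ n) * x = 0 := by
    intro n
    cases n with
    | zero => simpa using hux
    | succ k => rw [mul_assoc, hw'pow_x, mul_zero]
  have huw's : ∀ n : ℕ, (u * w' ^ n) * s = 0 := by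
    intro n
    cases n with
    | zero => simpa using hus
    | succ k =>
      rw [mul_assoc, pow_succ, mul_assoc, hw's, mul_zero, mul_zero]
  have hsx : s * x = 0 := by
    rw [hsd, ← Summable.tsum_mul_right x hsF]
    have hterm : ∀ n : ℕ, (x ^ (n+2) * (u * w' ^ n)) * x = 0 := by
      intro n
      rw [mul_assoc, huw'x, mul_zero]
    simp only [hterm, tsum_zero]
  have hss : s * s = 0 := by
    have h2 : ∑' n : ℕ, (x ^ (n+2) * (u * w' ^ n)) * s = s * s := by
      rw [Summable.tsum_mul_right s hsF, ← hsd]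
    rw [← h2]
    have hterm : ∀ n : ℕ, (x ^ (n+2) * (u * w' ^ n)) * s = 0 := by
      intro n
      rw [mul_assoc, huw's, mul_zero]
    simp only [hterm, tsum_zero]
  have hps : p * s = s := by
    rw [hsd, ← Summable.tsum_mul_left p hsF]
    apply tsum_congr
    intro n
    rw [← mul_assoc, hpx_pow]
  have hps' : p * s' = s' := by
    rw [hs'd, ← Summable.tsum_mul_left p hsF']
    apply tsum_congr
    intro n
    rw [← mul_assoc, hpx_pow]
  have hs'w' : s' * w' = ∑' n : ℕ, x ^ (n+1) * (u * w' ^ (n+1)) := by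
    rw [hs'd, ← Summable.tsum_mul_right w' hsF']
    apply tsum_congr
    intro n
    rw [mul_assoc, mul_assoc, ← pow_succ]
  have hs'aw' : s' * a = s' * w' := by rw [hs'a, hs'w']
  -- the candidate d = x + s
  have hade : a * (x + s) = p + s' := by rw [mul_add, hax, has]
  have grd1 : a * (x + s) ^ 2 = x + s := by
    have hd2exp : (x + s) * (x + s) = x * x + x * s + (s * x + s * s) := by
      noncomm_ring
    calc a * (x + s) ^ 2 = a * (x * x) + a * (x * s) := by
          rw [sq, hd2exp, hsx, hss, add_zero, add_zero, mul_add]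
      _ = x + (a * x) * s := by rw [hax2, ← mul_assoc]
      _ = x + s := by rw [hax, hps]
  have hada : a * (x + s) * a = p * a + s' * w' := by
    calc a * (x + s) * a = (p + s') * a := by rw [hade]
      _ = p * a + s' * a := by rw [add_mul]
      _ = p * a + s' * w' := by rw [hs'aw']
  have grd2 : a ^ 2 * (x + s) = a * (x + s) * a := by
    calc a ^ 2 * (x + s) = a * (a * (x + s)) := by rw [sq, mul_assoc]
      _ = a * p + a * s' := by rw [hade, mul_add]
      _ = a * p + (u + ∑' n : ℕ, x ^ (n+1) * (u * w' ^ (n+1))) := by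
          rw [has', hG_sum]
      _ = a * p + (u + s' * w') := by rw [← hs'w']
      _ = p * a + s' * w' := by rw [hud]; abel
      _ = a * (x + s) * a := hada.symm
  have grd3 : Quasinilpotent (a - a * (x + s) * a) := by
    have hzd : a - a * (x + s) * a = w' - s' * w' := by
      rw [hada, hw'd]; abel
    have hzpow : ∀ n : ℕ, (w' - s' * w') ^ (n+1) = w' ^ (n+1) - s' * w' ^ (n+1) := by
      intro n
      induction n with
      | zero => simp
      | succ n ih =>
        calc (w' - s' * w') ^ (n+1+1) = (w' ^ (n+1) - s' * w' ^ (n+1)) * (w' - s' * w') := by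
              rw [pow_succ, ih]
          _ = w' ^ (n+1) * w' - (w' ^ (n+1) * s') * w'
                - (s' * (w' ^ (n+1) * w') - s' * ((w' ^ (n+1) * s') * w')) := by
              noncomm_ring
          _ = w' ^ (n+2) - s' * w' ^ (n+2) := by
              rw [hw'pow_s' n, zero_mul, mul_zero, sub_zero, sub_zero, ← pow_succ]
    rw [Quasinilpotent, hzd]
    apply tendsto_of_pow_small (fun n => norm_nonneg _)
    apply small_transfer (1 + ‖s'‖) (by positivity) smallw'
    filter_upwards [eventually_ge_atTop 1] with n hn
    obtain ⟨k, rfl⟩ : ∃ k, n = k + 1 := ⟨n - 1, by omega⟩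
    rw [hzpow k]
    calc ‖w' ^ (k+1) - s' * w' ^ (k+1)‖
        ≤ ‖w' ^ (k+1)‖ + ‖s' * w' ^ (k+1)‖ := norm_sub_le _ _
      _ ≤ ‖w' ^ (k+1)‖ + ‖s'‖ * ‖w' ^ (k+1)‖ := by
          have := norm_mul_le s' (w' ^ (k+1))
          linarith
      _ = (1 + ‖s'‖) * ‖w' ^ (k+1)‖ := by ring
  refine ⟨x + s, x, ⟨grd1, grd2, grd3⟩, ?_, ?_, ?_⟩
  · rw [sq]; exact hax2.symm
  · -- star condition
    have hamx : a ^ (m+1) * x = a ^ m * p := by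
      rw [pow_succ, mul_assoc, hax]
    have hpe : p * (p + s') = p + s' := by rw [mul_add, hpp, hps']
    have he_am : p + s' = a ^ m * ((p * t ^ m) * (p + s')) := by
      calc p + s' = p * (p + s') := hpe.symm
        _ = (a ^ m * (p * t ^ m)) * (p + s') := by rw [hk m]
        _ = a ^ m * ((p * t ^ m) * (p + s')) := mul_assoc _ _ _
    have hstar' : star b * (star (a ^ (m+1)) * a ^ m) = star (a ^ m) * (a ^ (m+1) * b) := by
      simpa only [star_mul, star_star, mul_assoc] using hstar
    have hg : star p * (star (a ^ m) * a ^ m) = (star (a ^ m) * a ^ m) * p := by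
      calc star p * (star (a ^ m) * a ^ m)
          = star b * (star a * (star (a ^ m) * a ^ m)) := by
            rw [hp, star_mul]; simp only [mul_assoc]
        _ = star b * (star (a ^ (m+1)) * a ^ m) := by
            rw [pow_succ, star_mul]; simp only [mul_assoc]
        _ = star (a ^ m) * (a ^ (m+1) * b) := hstar'
        _ = star (a ^ m) * (a ^ m * (a * b)) := by
            rw [pow_succ]; simp only [mul_assoc]
        _ = (star (a ^ m) * a ^ m) * p := by rw [← hp, mul_assoc]
    have hpc : p * ((p * t ^ m) * (p + s')) = (p * t ^ m) * (p + s') := by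
      calc p * ((p * t ^ m) * (p + s')) = ((p * p) * t ^ m) * (p + s') := by
            simp only [mul_assoc]
        _ = (p * t ^ m) * (p + s') := by rw [hpp]
    have key : star p * (star (a ^ m) * (p + s')) = star (a ^ m) * (p + s') := by
      calc star p * (star (a ^ m) * (p + s'))
          = star p * (star (a ^ m) * (a ^ m * ((p * t ^ m) * (p + s')))) := by
            rw [← he_am]
        _ = (star p * (star (a ^ m) * a ^ m)) * ((p * t ^ m) * (p + s')) := by
            simp only [mul_assoc]
        _ = ((star (a ^ m) * a ^ m) * p) * ((p * t ^ m) * (p + s')) := by rw [hg]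
        _ = (star (a ^ m) * a ^ m) * (p * ((p * t ^ m) * (p + s'))) := by
            rw [mul_assoc]
        _ = (star (a ^ m) * a ^ m) * ((p * t ^ m) * (p + s')) := by rw [hpc]
        _ = star (a ^ m) * (a ^ m * ((p * t ^ m) * (p + s'))) := by rw [mul_assoc]
        _ = star (a ^ m) * (p + s') := by rw [← he_am]
    have main : star (p + s') * (a ^ m * p) = star (p + s') * a ^ m := by
      apply star_injective
      calc star (star (p + s') * (a ^ m * p))
          = star p * (star (a ^ m) * (p + s')) := by
            simp only [star_mul, star_star, mul_assoc]
        _ = star (a ^ m) * (p + s') := key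
        _ = star (star (p + s') * a ^ m) := by rw [star_mul, star_star]
    calc star (a * (x + s)) * a ^ (m+1) * x
        = star (p + s') * (a ^ (m+1) * x) := by rw [hade, mul_assoc]
      _ = star (p + s') * (a ^ m * p) := by rw [hamx]
      _ = star (p + s') * a ^ m := main
      _ = star (a * (x + s)) * a ^ m := by rw [hade]
  · -- tendsto condition
    have hwn : ∀ n : ℕ, a ^ (n+1) - p * a ^ (n+1) = w' ^ (n+1) := by
      intro n
      induction n with
      | zero => simp [hw'd]
      | succ n ih =>
        calc a ^ (n+1+1) - p * a ^ (n+1+1) = (a ^ (n+1) - p * a ^ (n+1)) * a := by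
              rw [sub_mul, mul_assoc, ← pow_succ]
          _ = w' ^ (n+1) * a := by rw [ih]
          _ = w' ^ (n+2) := hw'pow_a n
    apply tendsto_of_pow_small (fun n => norm_nonneg _)
    intro ε hε
    filter_upwards [smallw' ε hε, eventually_ge_atTop 1] with n h1 hn
    obtain ⟨k, rfl⟩ : ∃ k, n = k + 1 := ⟨n - 1, by omega⟩
    have : a ^ (k+1) - a * x * a ^ (k+1) = w' ^ (k+1) := by
      rw [hax, hwn]
    rw [this]
    exact h1

theorem mgrgi_iff_five {A : Type*} [NormedRing A] [NormedAlgebra ℂ A] [CompleteSpace A]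
    [StarRing A] (a : A) (m : ℕ) (hm : 1 ≤ m) :
    (∃ d x, IsGRD a d ∧ IsMGRGI m a d x) ↔
      ∃ b : A, b * a * b = b ∧ a ^ 2 * b ^ 2 = a * b ∧
        star (star (a ^ m) * a ^ (m + 1) * b) = star (a ^ m) * a ^ (m + 1) * b ∧
        (Set.range fun r : A => a * b * r) = (Set.range fun r : A => a ^ 2 * b * r) ∧
        Quasinilpotent (a - a ^ 2 * b) := by
  constructor
  · rintro ⟨d, x, ⟨hd1, hd2, hd3⟩, hx1, hx2, hx3⟩
    exact forward_dir a d x m hd1 hd2 hd3 hx1 hx2 hx3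
  · rintro ⟨b, h1, h2, h3, h4, h5⟩
    exact backward_dir a b m h1 h2 h3 h4 h5
end

section
/- Representation via the generalized right core inverse: if a ∈ A has a generalized right core inverse a_r^{d◦} (satisfying a(a_r^{d◦})^2 = a_r^{d◦}, (a a_r^{d◦})^* = a a_r^{d◦}, lim ‖a^n − a a_r^{d◦} a^{n+1}‖^{1/n} = 0), then a has an m-generalized right group inverse and a_r^{g_m} = (a_r^d)^{m+1} a a_r^{d◦} a^m = (a_r^d a a_r^{d◦})^{m+1} a^m. -/
/-- `c` is a generalized right core inverse of `a`. -/
def IsGRCore {A : Type*} [NormedRing A] [StarRing A] (a c : A) : Prop :=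
  a * c ^ 2 = c ∧ star (a * c) = a * c ∧
    Filter.Tendsto (fun n : ℕ => ‖a ^ n - a * c * a ^ (n + 1)‖ ^ ((1 : ℝ) / n))
      Filter.atTop (nhds 0)

section MgrgiAux

open Filter

variable {A : Type*} [NormedRing A]

lemma small_of_tendsto_rpow (w : ℕ → ℝ) (hw : ∀ n, 0 ≤ w n)
    (h : Filter.Tendsto (fun n : ℕ => (w n) ^ ((1:ℝ)/n)) Filter.atTop (nhds 0))
    {ε : ℝ} (hε : 0 < ε) : ∀ᶠ n in Filter.atTop, w n ≤ ε ^ n := by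
  have h1 : ∀ᶠ n : ℕ in Filter.atTop, (w n) ^ ((1:ℝ)/n) < ε :=
    h.eventually_lt_const hε
  filter_upwards [h1, Filter.eventually_ge_atTop 1] with n hn hn1
  have hn0 : ((n:ℝ)) ≠ 0 := Nat.cast_ne_zero.mpr (by omega)
  have h2 : ((w n) ^ ((1:ℝ)/n)) ^ n ≤ ε ^ n :=
    pow_le_pow_left₀ (Real.rpow_nonneg (hw n) _) hn.le n
  calc w n = ((w n) ^ ((1:ℝ)/n)) ^ n := by
        rw [← Real.rpow_natCast ((w n) ^ ((1:ℝ)/n)) n, ← Real.rpow_mul (hw n),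
          one_div, inv_mul_cancel₀ hn0, Real.rpow_one]
    _ ≤ ε ^ n := h2

lemma tendsto_rpow_div_of_small (w : ℕ → ℝ) (hw : ∀ n, 0 ≤ w n)
    (h : ∀ ε : ℝ, 0 < ε → ε ≤ 1 → ∀ᶠ n in Filter.atTop, w n ≤ ε ^ n) :
    Filter.Tendsto (fun n : ℕ => (w n) ^ ((1:ℝ)/n)) Filter.atTop (nhds 0) := by
  rw [Metric.tendsto_atTop]
  intro δ hδ
  have hmin : 0 < min δ 1 := lt_min hδ one_pos
  have hε : 0 < min δ 1 / 2 := by linarith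
  have hε1 : min δ 1 / 2 ≤ 1 := by
    have : min δ 1 ≤ 1 := min_le_right _ _
    linarith
  have hεδ : min δ 1 / 2 < δ := by
    have h1' : min δ 1 ≤ δ := min_le_left _ _
    linarith
  obtain ⟨N, hN⟩ := Filter.eventually_atTop.1 (h (min δ 1 / 2) hε hε1)
  refine ⟨max N 1, fun n hn => ?_⟩
  have hn1 : 1 ≤ n := le_trans (le_max_right _ _) hn
  have hNle : N ≤ n := le_trans (le_max_left _ _) hn
  have hwn : w n ≤ (min δ 1 / 2) ^ n := hN n hNle
  have hn0 : ((n:ℝ)) ≠ 0 := Nat.cast_ne_zero.mpr (by omega)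
  have h2 : (w n) ^ ((1:ℝ)/n) ≤ ((min δ 1 / 2)^n : ℝ) ^ ((1:ℝ)/n) :=
    Real.rpow_le_rpow (hw n) hwn (by positivity)
  rw [← Real.rpow_natCast (min δ 1 / 2) n, ← Real.rpow_mul hε.le, mul_one_div,
    div_self hn0, Real.rpow_one] at h2
  have hnn : 0 ≤ (w n) ^ ((1:ℝ)/n) := Real.rpow_nonneg (hw n) _
  rw [dist_zero_right, Real.norm_eq_abs, abs_of_nonneg hnn]
  exact lt_of_le_of_lt h2 hεδ

lemma eq_zero_aux (y : A) (u z : ℕ → A) (B : ℝ) (hB : 1 ≤ B)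
    (hu : Filter.Tendsto (fun n : ℕ => ‖u n‖ ^ ((1:ℝ)/n)) Filter.atTop (nhds 0))
    (hz : ∀ n, ‖z n‖ ≤ B ^ (n+1))
    (hy : ∀ᶠ n in Filter.atTop, y = u n * z n) : y = 0 := by
  have hB0 : (0:ℝ) < B := lt_of_lt_of_le one_pos hB
  have hBne : B ≠ 0 := ne_of_gt hB0
  have hε : (0:ℝ) < (2*B)⁻¹ := by positivity
  have hsmall := small_of_tendsto_rpow (fun n => ‖u n‖) (fun n => norm_nonneg _) hu hε
  have h12 : (2*B)⁻¹ * B = 1/2 := by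
    rw [mul_inv, mul_assoc, inv_mul_cancel₀ hBne, mul_one, one_div]
  have hbound : ∀ᶠ n in Filter.atTop, ‖y‖ ≤ (1/2:ℝ)^n * B := by
    filter_upwards [hsmall, hy] with n h1 h2
    calc ‖y‖ = ‖u n * z n‖ := by rw [h2]
      _ ≤ ‖u n‖ * ‖z n‖ := norm_mul_le _ _
      _ ≤ ((2*B)⁻¹)^n * B^(n+1) :=
          mul_le_mul h1 (hz n) (norm_nonneg _) (pow_nonneg hε.le n)
      _ = (1/2:ℝ)^n * B := by rw [pow_succ, ← mul_assoc, ← mul_pow, h12]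
  have hlim : Filter.Tendsto (fun n : ℕ => (1/2:ℝ)^n * B) Filter.atTop (nhds 0) := by
    have h := tendsto_pow_atTop_nhds_zero_of_lt_one (by norm_num : (0:ℝ) ≤ 1/2)
      (by norm_num : (1/2:ℝ) < 1)
    simpa using h.mul_const B
  exact norm_le_zero_iff.mp (ge_of_tendsto hlim hbound)

end MgrgiAux

open Filter in
theorem mgrgi_of_core {A : Type*} [NormedRing A] [NormedAlgebra ℂ A] [CompleteSpace A]
    [StarRing A] (a c d : A) (m : ℕ) (hm : 1 ≤ m)
    (hc : IsGRCore a c) (hd : IsGRD a d) :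
    IsMGRGI m a d (d ^ (m + 1) * (a * c) * a ^ m) ∧
      d ^ (m + 1) * (a * c) * a ^ m = (d * a * c) ^ (m + 1) * a ^ m := by
  obtain ⟨hc1, hc2, hc3⟩ := hc
  obtain ⟨hd1, hd2, hd3⟩ := hd
  rw [pow_two] at hc1 hd1
  -- hc1 : a * (c * c) = c,  hd1 : a * (d * d) = d
  -- exact power identities
  have P3 : ∀ n : ℕ, a ^ n * d ^ (n+1) = d := by
    intro n
    induction n with
    | zero => simp
    | succ k ih =>
      calc a ^ (k+1) * d ^ (k+1+1)
          = (a * a^k) * (d^(k+1) * d) := by rw [pow_succ' a k, pow_succ d (k+1)]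
        _ = a * ((a^k * d^(k+1)) * d) := by simp only [mul_assoc]
        _ = a * (d * d) := by rw [ih]
        _ = d := hd1
  have P4 : ∀ n : ℕ, a ^ (n+1) * d ^ (n+1) = a * d := by
    intro n
    calc a^(n+1) * d^(n+1) = (a * a^n) * d^(n+1) := by rw [pow_succ' a n]
      _ = a * (a^n * d^(n+1)) := by rw [mul_assoc]
      _ = a * d := by rw [P3 n]
  have P1 : ∀ n : ℕ, a ^ (n+1) * c ^ (n+1) = a * c := by
    intro n
    induction n with
    | zero => simp
    | succ k ih =>
      calc a ^ (k+1+1) * c ^ (k+1+1)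
          = (a^(k+1) * a) * (c * (c * c^k)) := by
            rw [pow_succ a (k+1), pow_succ' c (k+1), pow_succ' c k]
        _ = a^(k+1) * ((a * (c * c)) * c^k) := by simp only [mul_assoc]
        _ = a^(k+1) * (c * c^k) := by rw [hc1]
        _ = a^(k+1) * c^(k+1) := by rw [← pow_succ' c k]
        _ = a * c := ih
  have hacc : (a*c)*c = c := by rw [mul_assoc]; exact hc1
  have hP2 : ∀ n : ℕ, a ^ (n+1) * c ^ (n+1+1) = c := by
    intro n
    calc a^(n+1) * c^(n+1+1) = (a^(n+1) * c^(n+1)) * c := by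
          rw [pow_succ c (n+1), ← mul_assoc]
      _ = (a*c)*c := by rw [P1 n]
      _ = c := hacc
  -- the big constant
  set B : ℝ := ‖c‖ + ‖d‖ + ‖(1:A)‖ + 1 with hBdef
  have hcB : ‖c‖ ≤ B := by rw [hBdef]; linarith [norm_nonneg d, norm_nonneg (1:A)]
  have hdB : ‖d‖ ≤ B := by rw [hBdef]; linarith [norm_nonneg c, norm_nonneg (1:A)]
  have h1B : ‖(1:A)‖ ≤ B := by rw [hBdef]; linarith [norm_nonneg c, norm_nonneg d]
  have hB1 : (1:ℝ) ≤ B := by rw [hBdef]; linarith [norm_nonneg c, norm_nonneg d, norm_nonneg (1:A)]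
  have hzc1 : ∀ n : ℕ, ‖-(c^(n+1))‖ ≤ B ^ (n+1) := by
    intro n
    rw [norm_neg]
    calc ‖c^(n+1)‖ ≤ ‖c‖^(n+1) := norm_pow_le' c n.succ_pos
      _ ≤ B^(n+1) := pow_le_pow_left₀ (norm_nonneg c) hcB (n+1)
  have hzd1 : ∀ n : ℕ, ‖-(d^(n+1))‖ ≤ B ^ (n+1) := by
    intro n
    rw [norm_neg]
    calc ‖d^(n+1)‖ ≤ ‖d‖^(n+1) := norm_pow_le' d n.succ_pos
      _ ≤ B^(n+1) := pow_le_pow_left₀ (norm_nonneg d) hdB (n+1)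
  have hzc0 : ∀ n : ℕ, ‖-(c^n)‖ ≤ B ^ (n+1) := by
    intro n
    rw [norm_neg]
    cases n with
    | zero => simpa using le_trans h1B (by nlinarith)
    | succ k =>
      calc ‖c^(k+1)‖ ≤ ‖c‖^(k+1) := norm_pow_le' c k.succ_pos
        _ ≤ B^(k+1) := pow_le_pow_left₀ (norm_nonneg c) hcB (k+1)
        _ = B^(k+1) * 1 := (mul_one _).symm
        _ ≤ B^(k+1) * B := by
            exact mul_le_mul_of_nonneg_left hB1 (pow_nonneg (by linarith) _)
        _ = B^(k+1+1) := (pow_succ B (k+1)).symm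
  -- C1 : (a*c)*(a*c) = c
  have C1 : (a*c)*(a*c) = c := by
    apply sub_eq_zero.mp
    apply eq_zero_aux _ (fun n => a^n - a*c*a^(n+1)) (fun n => -(c^(n+1))) B hB1 hc3 hzc1
    filter_upwards [eventually_ge_atTop 1] with n hn
    obtain ⟨k, rfl⟩ : ∃ k, n = k+1 := ⟨n-1, by omega⟩
    have h1 : a*c*a^(k+1+1)*c^(k+1+1) = (a*c)*(a*c) := by
      rw [mul_assoc (a*c), P1 (k+1)]
    have h2 : a^(k+1)*c^(k+1+1) = c := hP2 k
    have h3 : (a^(k+1) - a*c*a^(k+1+1)) * -(c^(k+1+1))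
        = a*c*a^(k+1+1)*c^(k+1+1) - a^(k+1)*c^(k+1+1) := by
      rw [mul_neg, sub_mul, neg_sub]
    rw [h3, h1, h2]
  have hcc : c*c = c := by
    calc c*c = ((a*c)*(a*c))*c := by rw [C1]
      _ = (a*c)*((a*c)*c) := by rw [mul_assoc]
      _ = c := by rw [hacc, hacc]
  have C2 : a*c = c := by
    have h : a*c = (a*c)*c := by rw [mul_assoc, hcc]
    rw [h]; exact hacc
  have hc3' : Filter.Tendsto (fun n : ℕ => ‖a^n - c*a^(n+1)‖^((1:ℝ)/n))
      Filter.atTop (nhds 0) := by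
    have h := hc3; simp only [C2] at h; exact h
  -- C3 : c*(a*d) = d
  have C3 : c*(a*d) = d := by
    apply sub_eq_zero.mp
    apply eq_zero_aux _ (fun n => a^n - c*a^(n+1)) (fun n => -(d^(n+1))) B hB1 hc3' hzd1
    filter_upwards with n
    calc c*(a*d) - d
        = c*(a^(n+1)*d^(n+1)) - d := by rw [P4 n]
      _ = (c*a^(n+1))*d^(n+1) - d := by rw [mul_assoc]
      _ = (a^n - (a^n - c*a^(n+1)))*d^(n+1) - d := by rw [sub_sub_cancel]
      _ = a^n*d^(n+1) - (a^n - c*a^(n+1))*d^(n+1) - d := by rw [sub_mul]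
      _ = (a^n - c*a^(n+1)) * -(d^(n+1)) := by rw [P3 n, mul_neg]; abel
  -- C4 : a*d = d
  have C4 : a*d = d := by
    calc a*d = a*(c*(a*d)) := by rw [C3]
      _ = (a*c)*(a*d) := by rw [← mul_assoc]
      _ = c*(a*d) := by rw [C2]
      _ = d := C3
  have hda : d*a = d := by
    have h := hd2
    rw [pow_two, mul_assoc, C4, C4] at h
    exact h.symm
  have hdd : d*d = d := by
    calc d*d = (a*d)*d := by rw [C4]
      _ = a*(d*d) := by rw [mul_assoc]
      _ = d := hd1
  have hdak : ∀ n : ℕ, d * a^(n+1) = d := by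
    intro n
    induction n with
    | zero => rw [pow_one]; exact hda
    | succ k ih =>
      calc d*a^(k+1+1) = d*(a^(k+1)*a) := by rw [pow_succ]
        _ = (d*a^(k+1))*a := by rw [← mul_assoc]
        _ = d*a := by rw [ih]
        _ = d := hda
  have hada : a*d*a = d := by rw [C4]; exact hda
  have hq : ∀ n : ℕ, (a - a*d*a)^(n+1) = a^(n+1) - d := by
    intro n
    rw [hada]
    induction n with
    | zero => rw [pow_one, pow_one]
    | succ k ih =>
      calc (a-d)^(k+1+1) = (a-d)*(a-d)^(k+1) := by rw [pow_succ' (a-d) (k+1)]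
        _ = (a-d)*(a^(k+1) - d) := by rw [ih]
        _ = a^(k+1+1) - d := by
            rw [mul_sub, sub_mul, sub_mul, C4, hdak k, hdd, ← pow_succ' a (k+1)]
            abel
  -- C6 : d*c = c
  have C6 : d*c = c := by
    apply sub_eq_zero.mp
    apply eq_zero_aux _ (fun n => (a - a*d*a)^n) (fun n => -(c^n)) B hB1 hd3 hzc0
    filter_upwards [eventually_ge_atTop 1] with n hn
    obtain ⟨k, rfl⟩ : ∃ k, n = k+1 := ⟨n-1, by omega⟩
    have hPc : a^(k+1)*c^(k+1) = c := by rw [P1 k, C2]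
    calc d*c - c
        = d*(a^(k+1)*c^(k+1)) - a^(k+1)*c^(k+1) := by rw [hPc]
      _ = (d*a^(k+1))*c^(k+1) - a^(k+1)*c^(k+1) := by rw [← mul_assoc]
      _ = d*c^(k+1) - a^(k+1)*c^(k+1) := by rw [hdak k]
      _ = (a - a*d*a)^(k+1) * -(c^(k+1)) := by rw [hq k, mul_neg, sub_mul, neg_sub]
  have hcd : c*d = d := by
    have h := C3; rw [C4] at h; exact h
  have hstarc : star c = c := by rw [C2] at hc2; exact hc2
  have hsdc : star d * c = star d := by
    calc star d * c = star d * star c := by rw [hstarc]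
      _ = star (c*d) := (star_mul c d).symm
      _ = star d := by rw [hcd]
  have hdpow' : ∀ n : ℕ, d^(n+1) = d := by
    intro n
    induction n with
    | zero => rw [pow_one]
    | succ k ih => rw [pow_succ, ih, hdd]
  have hcpow' : ∀ n : ℕ, c^(n+1) = c := by
    intro n
    induction n with
    | zero => rw [pow_one]
    | succ k ih => rw [pow_succ, ih, hcc]
  have hdpow : d^(m+1) = d := hdpow' m
  have hcpow : c^(m+1) = c := hcpow' m
  have hakc : ∀ n : ℕ, a^(n+1)*c = c := by
    intro n
    induction n with
    | zero => rw [pow_one]; exact C2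
    | succ k ih => rw [pow_succ' a (k+1), mul_assoc, ih]; exact C2
  have hmc : a^m * c = c := by
    obtain ⟨k, hk⟩ : ∃ k, m = k+1 := ⟨m-1, by omega⟩
    rw [hk]; exact hakc k
  have hx : d^(m+1)*(a*c)*a^m = c*a^m := by
    rw [C2, hdpow, C6]
  refine ⟨⟨?_, ?_, ?_⟩, ?_⟩
  · -- x = a * x^2
    rw [hx, pow_two]
    have h1 : (c*a^m)*(c*a^m) = c*a^m := by
      calc (c*a^m)*(c*a^m) = c*((a^m*c)*a^m) := by simp only [mul_assoc]
        _ = c*(c*a^m) := by rw [hmc]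
        _ = (c*c)*a^m := by rw [← mul_assoc]
        _ = c*a^m := by rw [hcc]
    rw [h1, ← mul_assoc, C2]
  · -- star condition
    rw [hx, C4]
    calc star d * a^(m+1) * (c*a^m)
        = star d * ((a^(m+1)*c)*a^m) := by simp only [mul_assoc]
      _ = star d * (c*a^m) := by rw [hakc m]
      _ = (star d * c)*a^m := by rw [← mul_assoc]
      _ = star d * a^m := by rw [hsdc]
  · -- limit condition
    have hax : ∀ n : ℕ, a * (d^(m+1)*(a*c)*a^m) * a^n = c*a^(n+m) := by
      intro n
      rw [hx]
      calc a*(c*a^m)*a^n = ((a*c)*a^m)*a^n := by simp only [mul_assoc]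
        _ = (c*a^m)*a^n := by rw [C2]
        _ = c*(a^m*a^n) := by rw [mul_assoc]
        _ = c*a^(n+m) := by rw [← pow_add, Nat.add_comm m n]
    simp only [hax]
    have hEc : ∀ ε : ℝ, 0 < ε → ∀ᶠ n in atTop, ‖a^n - c*a^(n+1)‖ ≤ ε^n :=
      fun ε hε => small_of_tendsto_rpow _ (fun n => norm_nonneg _) hc3' hε
    have main : ∀ k : ℕ, ∀ ε : ℝ, 0 < ε → ε ≤ 1 →
        ∀ᶠ n in atTop, ‖a^n - c*a^(n+(k+1))‖ ≤ (1+‖c‖)^(k+1)*ε^n := by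
      intro k
      induction k with
      | zero =>
        intro ε hε hε1
        filter_upwards [hEc ε hε] with n hn
        have hεn : (0:ℝ) ≤ ε^n := pow_nonneg hε.le n
        have hc0 : (0:ℝ) ≤ ‖c‖ := norm_nonneg c
        calc ‖a^n - c*a^(n+(0+1))‖ = ‖a^n - c*a^(n+1)‖ := by norm_num
          _ ≤ ε^n := hn
          _ ≤ (1+‖c‖)^(0+1)*ε^n := by
              rw [zero_add, pow_one]; nlinarith
      | succ k ih =>
        intro ε hε hε1
        obtain ⟨N1, hN1⟩ := eventually_atTop.1 (hEc ε hε)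
        obtain ⟨N2, hN2⟩ := eventually_atTop.1 (ih ε hε hε1)
        rw [eventually_atTop]
        refine ⟨N1 + N2, fun n hn => ?_⟩
        have hb1 : ‖a^n - c*a^(n+1)‖ ≤ ε^n := hN1 n (by omega)
        have hb2 : ‖a^(n+1) - c*a^((n+1)+(k+1))‖ ≤ (1+‖c‖)^(k+1)*ε^(n+1) :=
          hN2 (n+1) (by omega)
        have id1 : a^n - c*a^(n+(k+1+1))
            = (a^n - c*a^(n+1)) + c*(a^(n+1) - c*a^((n+1)+(k+1))) := by
          rw [mul_sub, ← mul_assoc, hcc, show (n+1)+(k+1) = n+(k+1+1) by omega]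
          abel
        have hc0 : (0:ℝ) ≤ ‖c‖ := norm_nonneg c
        have hP1 : (1:ℝ) ≤ (1+‖c‖)^(k+1) := by
          have := pow_le_pow_left₀ (by norm_num : (0:ℝ) ≤ 1) (by linarith : (1:ℝ) ≤ 1+‖c‖) (k+1)
          simpa using this
        have hεn : (0:ℝ) ≤ ε^n := pow_nonneg hε.le n
        calc ‖a^n - c*a^(n+(k+1+1))‖
            ≤ ‖a^n - c*a^(n+1)‖ + ‖c*(a^(n+1) - c*a^((n+1)+(k+1)))‖ := by
              rw [id1]; exact norm_add_le _ _
          _ ≤ ‖a^n - c*a^(n+1)‖ + ‖c‖*‖a^(n+1) - c*a^((n+1)+(k+1))‖ :=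
              add_le_add_right (norm_mul_le _ _) _
          _ ≤ ε^n + ‖c‖*((1+‖c‖)^(k+1)*ε^(n+1)) :=
              add_le_add hb1 (mul_le_mul_of_nonneg_left hb2 hc0)
          _ ≤ (1+‖c‖)^(k+1+1)*ε^n := by
              rw [pow_succ (1+‖c‖) (k+1), pow_succ ε n]
              nlinarith [mul_nonneg (sub_nonneg.mpr hP1) hεn,
                mul_nonneg (mul_nonneg (mul_nonneg hc0 (le_trans zero_le_one hP1)) hεn)
                  (sub_nonneg.mpr hε1)]
    apply tendsto_rpow_div_of_small _ (fun n => norm_nonneg _)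
    intro ε hε hε1
    obtain ⟨k, hk⟩ : ∃ k, m = k+1 := ⟨m-1, by omega⟩
    have h1 := main k (ε/2) (by linarith) (by linarith)
    have h2 : ∀ᶠ n : ℕ in atTop, (1+‖c‖)^(k+1) ≤ 2^n := by
      have h3 : Tendsto (fun n : ℕ => (2:ℝ)^n) atTop atTop :=
        tendsto_pow_atTop_atTop_of_one_lt (by norm_num)
      exact h3.eventually_ge_atTop _
    rw [hk]
    filter_upwards [h1, h2] with n hb1 hb2
    have hεn : (0:ℝ) ≤ (ε/2)^n := pow_nonneg (by linarith) n
    calc ‖a^n - c*a^(n+(k+1))‖ ≤ (1+‖c‖)^(k+1)*(ε/2)^n := hb1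
      _ ≤ 2^n * (ε/2)^n := mul_le_mul_of_nonneg_right hb2 hεn
      _ = ε^n := by rw [← mul_pow]; congr 1; ring
  · -- second conjunct
    have hdac : d*a*c = c := by rw [hda, C6]
    rw [hx, hdac, hcpow]
end

section
/- Uniqueness-free equational characterization: let a ∈ A have a generalized right core inverse a_r^{d◦}. Then x is the m-generalized right group inverse of a if and only if x = ax^2, a^{m+1} x = a a_r^{d◦} a^m, and lim_{n→∞} ‖a^n − a x a^n‖^{1/n} = 0. -/
section Helpers

open Filter

lemma collapse {A : Type*} [NormedRing A] (t : ℕ → A)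
    (ht : Filter.Tendsto (fun n : ℕ => ‖t n‖ ^ ((1 : ℝ) / n)) Filter.atTop (nhds 0))
    (z w b : A) (hb : ∀ n : ℕ, 1 ≤ n → t n * z ^ n * w = b) : b = 0 := by
  have hδpos : (0:ℝ) < (2 * (‖z‖ + 1))⁻¹ := by positivity
  set δ : ℝ := (2 * (‖z‖ + 1))⁻¹ with hδ
  have hδz : δ * ‖z‖ ≤ 1/2 := by
    have h1 : δ * ‖z‖ ≤ δ * (‖z‖ + 1) := by
      have := norm_nonneg z
      have h0 : ‖z‖ ≤ ‖z‖ + 1 := by linarith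
      exact mul_le_mul_of_nonneg_left h0 hδpos.le
    have h2 : δ * (‖z‖ + 1) = 1/2 := by
      rw [hδ]
      have : ‖z‖ + 1 ≠ 0 := by positivity
      field_simp
    linarith
  have hev : ∀ᶠ n in atTop, ‖t n‖ ^ ((1:ℝ)/n) < δ := ht.eventually_lt_const hδpos
  have key : Tendsto (fun n : ℕ => t n * z ^ n * w) atTop (nhds 0) := by
    rw [tendsto_zero_iff_norm_tendsto_zero]
    apply squeeze_zero' (Filter.Eventually.of_forall fun n => norm_nonneg _)
      (g := fun n : ℕ => ‖w‖ * (1/2 : ℝ) ^ n)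
    · filter_upwards [hev, eventually_ge_atTop 1] with n hn hn1
      have hnn : (n:ℝ) ≠ 0 := by exact_mod_cast Nat.one_le_iff_ne_zero.mp hn1
      have e : ‖t n‖ = (‖t n‖ ^ ((1:ℝ)/n)) ^ n := by
        rw [← Real.rpow_natCast (‖t n‖ ^ ((1:ℝ)/n)) n, ← Real.rpow_mul (norm_nonneg _),
          one_div, inv_mul_cancel₀ hnn, Real.rpow_one]
      have h1 : ‖t n‖ ≤ δ ^ n := by
        rw [e]
        exact pow_le_pow_left₀ (Real.rpow_nonneg (norm_nonneg _) _) hn.le n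
      have h2 : ‖t n * z ^ n * w‖ ≤ ‖t n‖ * ‖z‖ ^ n * ‖w‖ := by
        calc ‖t n * z ^ n * w‖ ≤ ‖t n * z ^ n‖ * ‖w‖ := norm_mul_le _ _
          _ ≤ ‖t n‖ * ‖z ^ n‖ * ‖w‖ := by
              gcongr; exact norm_mul_le _ _
          _ ≤ ‖t n‖ * ‖z‖ ^ n * ‖w‖ := by
              gcongr
              exact norm_pow_le' z (Nat.lt_of_lt_of_le Nat.zero_lt_one hn1)
      have h3 : δ ^ n * ‖z‖ ^ n ≤ (1/2:ℝ) ^ n := by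
        rw [← mul_pow]
        exact pow_le_pow_left₀ (by positivity) hδz n
      calc ‖t n * z ^ n * w‖ ≤ ‖t n‖ * ‖z‖ ^ n * ‖w‖ := h2
        _ ≤ δ ^ n * ‖z‖ ^ n * ‖w‖ := by
            gcongr
        _ ≤ (1/2:ℝ) ^ n * ‖w‖ := by gcongr
        _ = ‖w‖ * (1/2:ℝ) ^ n := by ring
    · have : Tendsto (fun n : ℕ => (1/2:ℝ)^n) atTop (nhds 0) :=
        tendsto_pow_atTop_nhds_zero_of_lt_one (by norm_num) (by norm_num)
      simpa using this.const_mul ‖w‖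
  have cst : Tendsto (fun n : ℕ => t n * z ^ n * w) atTop (nhds b) := by
    apply Tendsto.congr' _ (tendsto_const_nhds : Tendsto (fun _ : ℕ => b) atTop (nhds b))
    filter_upwards [eventually_ge_atTop 1] with n hn
    exact (hb n hn).symm
  exact tendsto_nhds_unique cst key

lemma powProd {A : Type*} [Monoid A] (a c : A) (h : a * (c * c) = c) :
    ∀ n : ℕ, a ^ (n + 1) * c ^ (n + 1) = a * c
  | 0 => by simp
  | Nat.succ n => by
    have ih := powProd a c h n
    calc a ^ (n + 2) * c ^ (n + 2)
        = (a ^ (n+1) * a) * (c * (c * c ^ n)) := by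
          rw [pow_succ a (n+1), pow_succ' c (n+1), pow_succ' c n]
      _ = a ^ (n+1) * ((a * (c * c)) * c ^ n) := by
          simp only [mul_assoc]
      _ = a ^ (n+1) * (c * c ^ n) := by rw [h]
      _ = a ^ (n+1) * c ^ (n+1) := by rw [pow_succ' c n]
      _ = a * c := ih

section alg
variable {A : Type*} [Ring A] (a d : A)

lemma hpa (hd2 : a ^ 2 * d = a * d * a) : (a * d) * a = a * (a * d) := by
  rw [← mul_assoc, ← pow_two] at *
  rw [← hd2]

lemma hpan (hd2 : a ^ 2 * d = a * d * a) : ∀ n : ℕ, (a * d) * a ^ n = a ^ n * (a * d)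
  | 0 => by simp
  | Nat.succ n => by
    have ih := hpan hd2 n
    calc (a * d) * a ^ (n+1) = ((a*d) * a^n) * a := by rw [pow_succ, ← mul_assoc]
      _ = (a^n * (a*d)) * a := by rw [ih]
      _ = a^n * ((a*d) * a) := by rw [mul_assoc]
      _ = a^n * (a * (a*d)) := by rw [hpa a d hd2]
      _ = a ^ (n+1) * (a*d) := by rw [pow_succ, mul_assoc]

lemma hp2 (hd1 : a * d ^ 2 = d) (hd2 : a ^ 2 * d = a * d * a) :
    (a * d) * (a * d) = a * d := by
  have h1 : (a * d) * (a * d) = (a * d * a) * d := by simp only [mul_assoc]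
  rw [h1, ← hd2, pow_two]
  calc a * a * d * d = a * (a * (d * d)) := by simp only [mul_assoc]
    _ = a * (a * d ^ 2) := by rw [pow_two]
    _ = a * d := by rw [hd1]

lemma qpow (hd1 : a * d ^ 2 = d) (hd2 : a ^ 2 * d = a * d * a) :
    ∀ n : ℕ, (a - a * d * a) ^ (n + 1) = a ^ (n+1) - (a * d) * a ^ (n+1)
  | 0 => by
    simp [mul_assoc]
  | Nat.succ n => by
    have ih := qpow hd1 hd2 n
    have hq : a - a * d * a = a - (a*d) * a := by rw [mul_assoc]
    calc (a - a * d * a) ^ (n+2)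
        = (a ^ (n+1) - (a*d) * a^(n+1)) * (a - (a*d)*a) := by
          rw [pow_succ, ih, hq]
      _ = a^(n+1)*a - a^(n+1)*((a*d)*a) - ((a*d)*a^(n+1))*a
            + ((a*d)*a^(n+1))*((a*d)*a) := by
          rw [sub_mul, mul_sub, mul_sub]; abel
      _ = a^(n+2) - (a*d)*a^(n+2) - (a*d)*a^(n+2) + (a*d)*a^(n+2) := by
          rw [← pow_succ]
          congr 1
          · congr 1
            · congr 1
              calc a^(n+1)*((a*d)*a) = a^(n+1)*(a*(a*d)) := by rw [hpa a d hd2]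
                _ = (a^(n+1)*a)*(a*d) := by rw [mul_assoc]
                _ = a^(n+2)*(a*d) := by rw [← pow_succ]
                _ = (a*d)*a^(n+2) := (hpan a d hd2 (n+2)).symm
            · rw [mul_assoc, ← pow_succ]
          · calc ((a*d)*a^(n+1))*((a*d)*a)
                = (a^(n+1)*(a*d))*((a*d)*a) := by rw [hpan a d hd2 (n+1)]
              _ = a^(n+1)*(((a*d)*(a*d))*a) := by simp only [mul_assoc]
              _ = a^(n+1)*((a*d)*a) := by rw [hp2 a d hd1 hd2]
              _ = a^(n+1)*(a*(a*d)) := by rw [hpa a d hd2]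
              _ = (a^(n+1)*a)*(a*d) := by rw [mul_assoc]
              _ = a^(n+2)*(a*d) := by rw [← pow_succ]
              _ = (a*d)*a^(n+2) := (hpan a d hd2 (n+2)).symm
      _ = a^(n+2) - (a*d)*a^(n+2) := by abel

end alg

lemma mid_iff {A : Type*} [NormedRing A] [StarRing A] (a c d x : A) (m : ℕ)
    (hc1 : a * c ^ 2 = c) (hc2 : star (a * c) = a * c)
    (hc3 : Filter.Tendsto (fun n : ℕ => ‖a ^ n - a * c * a ^ (n + 1)‖ ^ ((1 : ℝ) / n))
      Filter.atTop (nhds 0))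
    (hd1 : a * d ^ 2 = d) (hd2 : a ^ 2 * d = a * d * a)
    (hd3 : Filter.Tendsto (fun n : ℕ => ‖(a - a * d * a) ^ n‖ ^ ((1 : ℝ) / n))
      Filter.atTop (nhds 0))
    (h1 : x = a * x ^ 2) :
    star (a * d) * a ^ (m + 1) * x = star (a * d) * a ^ m ↔
      a ^ (m + 1) * x = a * c * a ^ m := by
  have hc1' : a * (c * c) = c := by rw [pow_two] at hc1; exact hc1
  have hd1' : a * (d * d) = d := by rw [pow_two] at hd1; exact hd1
  have h1' : a * (x * x) = x := by
    have := h1.symm; rw [pow_two] at this; exact this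
  -- Identity A : (a*c)*(a*(a*d)) = a*d
  have hA0 : (a * c) * (a * (a * d)) = a * d := by
    have h := collapse (fun n => a ^ n - a * c * a ^ (n + 1)) hc3 d 1
      (a * d - a * c * (a * (a * d))) ?_
    · exact (sub_eq_zero.mp h).symm
    · intro n hn
      obtain ⟨k, rfl⟩ : ∃ k, n = k + 1 := ⟨n - 1, by omega⟩
      rw [mul_one, sub_mul]
      congr 1
      · exact powProd a d hd1' k
      · rw [pow_succ' a (k+1)]
        simp only [mul_assoc]
        rw [powProd a d hd1' k]
  -- Identity B : (a*c)*(a*c) = c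
  have hB0 : (a * c) * (a * c) = c := by
    have h := collapse (fun n => a ^ n - a * c * a ^ (n + 1)) hc3 c c
      (c - a * c * (a * c)) ?_
    · exact (sub_eq_zero.mp h).symm
    · intro n hn
      obtain ⟨k, rfl⟩ : ∃ k, n = k + 1 := ⟨n - 1, by omega⟩
      rw [sub_mul, sub_mul]
      congr 1
      · rw [powProd a c hc1' k, mul_assoc]; exact hc1'
      · calc a * c * a ^ (k+1+1) * c ^ (k+1) * c
            = (a * c) * (a ^ (k+1+1) * (c ^ (k+1) * c)) := by simp only [mul_assoc]
          _ = (a * c) * (a ^ (k+1+1) * c ^ (k+1+1)) := by rw [← pow_succ]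
          _ = a * c * (a * c) := by rw [powProd a c hc1' (k+1)]
  -- Identity C : (a*c)*(a*d) = d
  have hC0 : (a * c) * (a * d) = d := by
    have h := collapse (fun n => a ^ n - a * c * a ^ (n + 1)) hc3 d d
      (d - a * c * (a * d)) ?_
    · exact (sub_eq_zero.mp h).symm
    · intro n hn
      obtain ⟨k, rfl⟩ : ∃ k, n = k + 1 := ⟨n - 1, by omega⟩
      rw [sub_mul, sub_mul]
      congr 1
      · rw [powProd a d hd1' k, mul_assoc]; exact hd1'
      · calc a * c * a ^ (k+1+1) * d ^ (k+1) * d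
            = (a * c) * (a ^ (k+1+1) * (d ^ (k+1) * d)) := by simp only [mul_assoc]
          _ = (a * c) * (a ^ (k+1+1) * d ^ (k+1+1)) := by rw [← pow_succ]
          _ = a * c * (a * d) := by rw [powProd a d hd1' (k+1)]
  -- Identity D : (a*d)*(a*c) = a*c
  have hD0 : (a * d) * (a * c) = a * c := by
    have h := collapse (fun n => (a - a * d * a) ^ n) hd3 c 1
      (a * c - a * d * (a * c)) ?_
    · exact (sub_eq_zero.mp h).symm
    · intro n hn
      obtain ⟨k, rfl⟩ : ∃ k, n = k + 1 := ⟨n - 1, by omega⟩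
      show (a - a * d * a) ^ (k+1) * c ^ (k+1) * 1 = a * c - a * d * (a * c)
      rw [mul_one, qpow a d hd1 hd2 k, sub_mul]
      congr 1
      · exact powProd a c hc1' k
      · rw [mul_assoc, powProd a c hc1' k, mul_assoc]
  -- Identity E : (a*c)*(a*x) = x
  have hE0 : (a * c) * (a * x) = x := by
    have h := collapse (fun n => a ^ n - a * c * a ^ (n + 1)) hc3 x x
      (x - a * c * (a * x)) ?_
    · exact (sub_eq_zero.mp h).symm
    · intro n hn
      obtain ⟨k, rfl⟩ : ∃ k, n = k + 1 := ⟨n - 1, by omega⟩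
      rw [sub_mul, sub_mul]
      congr 1
      · rw [powProd a x h1' k, mul_assoc]; exact h1'
      · calc a * c * a ^ (k+1+1) * x ^ (k+1) * x
            = (a * c) * (a ^ (k+1+1) * (x ^ (k+1) * x)) := by simp only [mul_assoc]
          _ = (a * c) * (a ^ (k+1+1) * x ^ (k+1+1)) := by rw [← pow_succ]
          _ = a * c * (a * x) := by rw [powProd a x h1' (k+1)]
  -- star manipulations
  have comm : star a * star (a * d) = star (a * d) * star a := by
    calc star a * star (a * d) = star ((a * d) * a) := (star_mul _ _).symm
      _ = star (a * (a * d)) := by rw [hpa a d hd2]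
      _ = star (a * d) * star a := by rw [star_mul]
  have S2 : star (a * d) = star (a * d) * star a * (a * c) := by
    calc star (a * d) = star ((a * c) * (a * (a * d))) := by rw [hA0]
      _ = star (a * (a * d)) * star (a * c) := by rw [star_mul]
      _ = star (a * d) * star a * (a * c) := by rw [star_mul, hc2]
  have S2' : star (a * d) = star a * (star (a * d) * (a * c)) := by
    calc star (a * d) = star (a * d) * star a * (a * c) := S2
      _ = (star a * star (a * d)) * (a * c) := by rw [comm]
      _ = star a * (star (a * d) * (a * c)) := by rw [mul_assoc]
  have S3 : star (a * d) = star a * (star a * (star (a * d) * c)) := by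
    have t1 : star a * (star (a * d) * (a * c))
        = star a * ((star a * (star (a * d) * (a * c))) * (a * c)) :=
      congrArg (fun y => star a * (y * (a * c))) S2'
    have S3' := S2'.trans t1
    simp only [mul_assoc] at S3'
    calc star (a * d) = star a * (star a * (star (a*d) * (a * (c * (a * c))))) := S3'
      _ = star a * (star a * (star (a*d) * c)) := by
          have hBn : a * (c * (a * c)) = c := by
            have := hB0; simp only [mul_assoc] at this; exact this
          rw [hBn]
  have S4 : c * (a * c) = c := by
    have hBn : a * (c * (a * c)) = c := by
      have := hB0; simp only [mul_assoc] at this; exact this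
    calc c * (a * c) = (a * (c * (a * c))) * (a * c) := by rw [hBn]
      _ = a * (c * (a * (c * (a * c)))) := by simp only [mul_assoc]
      _ = a * (c * c) := by rw [hBn]
      _ = c := hc1'
  have S5 : star (a * d) * (a * c) = star (a * d) := by
    calc star (a * d) * (a * c)
        = (star a * (star a * (star (a * d) * c))) * (a * c) := by rw [← S3]
      _ = star a * (star a * (star (a * d) * (c * (a * c)))) := by simp only [mul_assoc]
      _ = star a * (star a * (star (a * d) * c)) := by rw [S4]
      _ = star (a * d) := S3.symm
  have S6 : (a * c) * (a * d) = a * d := by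
    have h := congrArg star S5
    rw [star_mul, star_star, hc2] at h
    exact h
  have hpd : a * d = d := by
    have h6 : a * (c * (a * d)) = a * d := by
      have := S6; simp only [mul_assoc] at this; exact this
    have hCn : a * (c * (a * d)) = d := by
      have := hC0; simp only [mul_assoc] at this; exact this
    exact h6.symm.trans hCn
  have S8 : a * (a * d) = a * d := by rw [hpd]; exact hpd
  have S9 : a * (a * c) = a * c := by
    have hDn : a * (d * (a * c)) = a * c := by
      have := hD0; simp only [mul_assoc] at this; exact this
    calc a * (a * c) = a * (a * (d * (a * c))) := by rw [hDn]
      _ = (a * (a * d)) * (a * c) := by simp only [mul_assoc]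
      _ = (a * d) * (a * c) := by rw [S8]
      _ = a * c := hD0
  have S10 : a * x = x := by
    calc a * x = a * ((a * c) * (a * x)) := by rw [hE0]
      _ = (a * (a * c)) * (a * x) := by simp only [mul_assoc]
      _ = (a * c) * (a * x) := by rw [S9]
      _ = x := hE0
  have S11 : (a * c) * x = x := by
    calc (a * c) * x = (a * c) * (a * x) := by rw [S10]
      _ = x := hE0
  have S12 : (a * c) * star (a * d) = a * c := by
    have h := congrArg star hD0
    rw [star_mul, hc2] at h
    exact h
  have S13 : ∀ k : ℕ, a ^ (k + 1) * x = x := by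
    intro k
    induction k with
    | zero => rw [pow_one]; exact S10
    | succ k ih =>
        calc a ^ (k + 2) * x = (a * a ^ (k+1)) * x := by rw [pow_succ' a (k+1)]
          _ = a * (a ^ (k+1) * x) := by rw [mul_assoc]
          _ = a * x := by rw [ih]
          _ = x := S10
  constructor
  · intro H
    have H' : star (a * d) * x = star (a * d) * a ^ m := by
      have h0 : star (a * d) * a ^ (m + 1) * x = star (a * d) * x := by
        rw [mul_assoc, S13 m]
      exact h0.symm.trans H
    have h2 := congrArg (fun y => (a * c) * y) H'
    simp only [← mul_assoc] at h2
    rw [S12] at h2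
    rw [S11] at h2
    rw [S13 m]
    exact h2
  · intro H
    have Hx : x = a * c * a ^ m := (S13 m).symm.trans H
    calc star (a * d) * a ^ (m + 1) * x
        = star (a * d) * (a ^ (m + 1) * x) := by rw [mul_assoc]
      _ = star (a * d) * x := by rw [S13 m]
      _ = star (a * d) * ((a * c) * a ^ m) := by rw [← Hx]
      _ = (star (a * d) * (a * c)) * a ^ m := by simp only [mul_assoc]
      _ = star (a * d) * a ^ m := by rw [S5]

end Helpers

theorem mgrgi_eq_char {A : Type*} [NormedRing A] [NormedAlgebra ℂ A] [CompleteSpace A]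
    [StarRing A] (a c d x : A) (m : ℕ) (hm : 1 ≤ m)
    (hc : IsGRCore a c) (hd : IsGRD a d) :
    IsMGRGI m a d x ↔
      (x = a * x ^ 2 ∧ a ^ (m + 1) * x = a * c * a ^ m ∧
        Filter.Tendsto (fun n : ℕ => ‖a ^ n - a * x * a ^ n‖ ^ ((1 : ℝ) / n))
          Filter.atTop (nhds 0)) := by
  obtain ⟨hc1, hc2, hc3⟩ := hc
  obtain ⟨hd1, hd2, hd3⟩ := hd
  have hd3' : Filter.Tendsto (fun n : ℕ => ‖(a - a * d * a) ^ n‖ ^ ((1 : ℝ) / n))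
      Filter.atTop (nhds 0) := hd3
  constructor
  · rintro ⟨h1, h2, h3⟩
    exact ⟨h1, (mid_iff a c d x m hc1 hc2 hc3 hd1 hd2 hd3' h1).mp h2, h3⟩
  · rintro ⟨h1, h2, h3⟩
    exact ⟨h1, (mid_iff a c d x m hc1 hc2 hc3 hd1 hd2 hd3' h1).mpr h2, h3⟩
end

section
/- Solution of a linear equation: let a ∈ A have a generalized right core inverse, hence an m-generalized right group inverse w = a_r^{g_m}. Then x solves (a a_r^d)^* a^{m+1} x = (a a_r^d)^* a^m b if and only if x = w b + (1 − w a) y for some y ∈ A. -/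
open Filter in
lemma aux_zero {A : Type*} [NormedRing A] (X : A) (G Y : ℕ → A) (C M : ℝ)
    (hC : 0 ≤ C) (hM : 0 ≤ M)
    (hG : Filter.Tendsto (fun n : ℕ => ‖G n‖ ^ ((1 : ℝ) / n)) Filter.atTop (nhds 0))
    (hXG : ∀ n : ℕ, 1 ≤ n → X = G n * Y n)
    (hY : ∀ n : ℕ, 1 ≤ n → ‖Y n‖ ≤ C * M ^ n) : X = 0 := by
  set ε : ℝ := 1 / (2 * (M + 1)) with hεdef
  have hε : (0:ℝ) < ε := by positivity
  have hev : ∀ᶠ n : ℕ in atTop, ‖G n‖ ^ ((1 : ℝ) / n) < ε :=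
    hG.eventually (gt_mem_nhds hε)
  have key : ∀ᶠ n : ℕ in atTop, ‖X‖ ≤ C * (1/2) ^ n := by
    filter_upwards [hev, eventually_ge_atTop 1] with n hn hn1
    have hn0 : (n : ℝ) ≠ 0 := by exact_mod_cast Nat.one_le_iff_ne_zero.mp hn1
    have hGn : ‖G n‖ ≤ ε ^ n := by
      have h1 : ‖G n‖ = (‖G n‖ ^ ((1:ℝ)/n)) ^ n := by
        rw [← Real.rpow_natCast (‖G n‖ ^ ((1:ℝ)/n)) n, ← Real.rpow_mul (norm_nonneg _)]
        rw [one_div, inv_mul_cancel₀ hn0, Real.rpow_one]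
      rw [h1]
      exact pow_le_pow_left₀ (Real.rpow_nonneg (norm_nonneg _) _) hn.le n
    have h2 : ‖X‖ ≤ ε ^ n * (C * M ^ n) := by
      rw [hXG n hn1]
      calc ‖G n * Y n‖ ≤ ‖G n‖ * ‖Y n‖ := norm_mul_le _ _
        _ ≤ ε ^ n * (C * M ^ n) := by
            apply mul_le_mul hGn (hY n hn1) (norm_nonneg _) (by positivity)
    have h3 : ε ^ n * (C * M ^ n) = C * (ε * M) ^ n := by rw [mul_pow]; ring
    have h4 : ε * M ≤ 1/2 := by
      rw [hεdef]
      rw [div_mul_eq_mul_div, one_mul, div_le_div_iff₀ (by positivity) (by norm_num)]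
      nlinarith
    calc ‖X‖ ≤ ε ^ n * (C * M ^ n) := h2
      _ = C * (ε * M) ^ n := h3
      _ ≤ C * (1/2) ^ n := by
          apply mul_le_mul_of_nonneg_left _ hC
          exact pow_le_pow_left₀ (by positivity) h4 n
  have hlim : Tendsto (fun n : ℕ => C * (1/2:ℝ) ^ n) atTop (nhds 0) := by
    have := (tendsto_pow_atTop_nhds_zero_of_lt_one (by norm_num : (0:ℝ) ≤ 1/2)
      (by norm_num : (1/2:ℝ) < 1)).const_mul C
    simpa using this
  have : ‖X‖ ≤ 0 := ge_of_tendsto hlim key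
  exact norm_le_zero_iff.mp this

theorem mgrgi_solve {A : Type*} [NormedRing A] [NormedAlgebra ℂ A] [CompleteSpace A]
    [StarRing A] (a b c d w : A) (m : ℕ) (hm : 1 ≤ m)
    (hc : IsGRCore a c) (hd : IsGRD a d) (hw : IsMGRGI m a d w) :
    ∀ x : A, star (a * d) * a ^ (m + 1) * x = star (a * d) * a ^ m * b ↔
      ∃ y : A, x = w * b + (1 - w * a) * y := by
  obtain ⟨hd1, hd2, hd3⟩ := hd
  obtain ⟨hc1, hc2, hc3⟩ := hc
  obtain ⟨hw1, hw2, hw3⟩ := hw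
  have hd1' : a * (d * d) = d := by rw [pow_two] at hd1; exact hd1
  have hc1' : a * (c * c) = c := by rw [pow_two] at hc1; exact hc1
  have hw1' : w = a * (w * w) := by rw [pow_two] at hw1; exact hw1
  have hcomm : (a*d)*a = a*(a*d) := by
    rw [pow_two] at hd2
    calc (a*d)*a = a*a*d := hd2.symm
      _ = a*(a*d) := mul_assoc a a d
  have he : (a*d)*(a*d) = a*d := by
    calc (a*d)*(a*d) = ((a*d)*a)*d := by simp only [mul_assoc]
      _ = (a*(a*d))*d := by rw [hcomm]
      _ = a*(a*(d*d)) := by simp only [mul_assoc]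
      _ = a*d := by rw [hd1']
  have hcommPow : ∀ j : ℕ, a^j * (a*d) = (a*d) * a^j := by
    intro j
    induction j with
    | zero => simp
    | succ j ih =>
      calc a^(j+1) * (a*d) = a^j * (a * (a*d)) := by rw [pow_succ]; simp only [mul_assoc]
        _ = a^j * ((a*d) * a) := by rw [hcomm]
        _ = (a^j * (a*d)) * a := by simp only [mul_assoc]
        _ = ((a*d) * a^j) * a := by rw [ih]
        _ = (a*d) * a^(j+1) := by rw [pow_succ]; simp only [mul_assoc]
  -- a^(j+1) d^(j+1) = a d
  have hadw : ∀ j : ℕ, a^(j+1) * d^(j+1) = a*d := by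
    intro j
    induction j with
    | zero => simp
    | succ j ih =>
      calc a^(j+1+1) * d^(j+1+1) = (a^(j+1) * a) * (d * (d * d^j)) := by
            rw [pow_succ a (j+1), pow_succ' d (j+1), pow_succ' d j]
        _ = a^(j+1) * ((a * (d*d)) * d^j) := by simp only [mul_assoc]
        _ = a^(j+1) * (d * d^j) := by rw [hd1']
        _ = a^(j+1) * d^(j+1) := by rw [← pow_succ']
        _ = a*d := ih
  have hadw1 : ∀ n : ℕ, 1 ≤ n → a^n * d^n = a*d := by
    intro n hn
    obtain ⟨j, rfl⟩ : ∃ j, n = j+1 := ⟨n-1, (Nat.succ_pred_eq_of_pos hn).symm⟩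
    exact hadw j
  -- a^j c^(j+1) = c
  have hacj : ∀ j : ℕ, a^j * c^(j+1) = c := by
    intro j
    induction j with
    | zero => simp
    | succ j ih =>
      calc a^(j+1) * c^(j+1+1) = (a^j * a) * (c * (c * c^j)) := by
            rw [pow_succ a j, pow_succ' c (j+1), pow_succ' c j]
        _ = a^j * ((a * (c*c)) * c^j) := by simp only [mul_assoc]
        _ = a^j * (c * c^j) := by rw [hc1']
        _ = a^j * c^(j+1) := by rw [← pow_succ']
        _ = c := ih
  -- a^j d^(j+1) = d
  have hadj1 : ∀ j : ℕ, a^j * d^(j+1) = d := by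
    intro j
    induction j with
    | zero => simp
    | succ j ih =>
      calc a^(j+1) * d^(j+1+1) = (a^j * a) * (d * (d * d^j)) := by
            rw [pow_succ a j, pow_succ' d (j+1), pow_succ' d j]
        _ = a^j * ((a * (d*d)) * d^j) := by simp only [mul_assoc]
        _ = a^j * (d * d^j) := by rw [hd1']
        _ = a^j * d^(j+1) := by rw [← pow_succ']
        _ = d := ih
  -- a^(j+1) w^(j+1) = a w
  have haww : ∀ j : ℕ, a^(j+1) * w^(j+1) = a*w := by
    intro j
    induction j with
    | zero => simp
    | succ j ih =>
      calc a^(j+1+1) * w^(j+1+1) = (a^(j+1) * a) * (w * (w * w^j)) := by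
            rw [pow_succ a (j+1), pow_succ' w (j+1), pow_succ' w j]
        _ = a^(j+1) * ((a * (w*w)) * w^j) := by simp only [mul_assoc]
        _ = a^(j+1) * (w * w^j) := by rw [← hw1']
        _ = a^(j+1) * w^(j+1) := by rw [← pow_succ']
        _ = a*w := ih
  have haww1 : ∀ n : ℕ, 1 ≤ n → a^n * w^n = a*w := by
    intro n hn
    obtain ⟨j, rfl⟩ : ∃ j, n = j+1 := ⟨n-1, (Nat.succ_pred_eq_of_pos hn).symm⟩
    exact haww j
  -- powers of the quasinilpotent q = a - a d a
  have hone : (1 - a*d)*(1 - a*d) = 1 - a*d := by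
    calc (1 - a*d)*(1 - a*d) = 1 - a*d - a*d + (a*d)*(a*d) := by noncomm_ring
      _ = 1 - a*d := by rw [he]; abel
  have hcommSub : ∀ j : ℕ, a^j * (1 - a*d) = (1 - a*d) * a^j := by
    intro j
    rw [mul_sub, sub_mul, mul_one, one_mul, hcommPow j]
  have hqj : ∀ j : ℕ, (a - a*d*a)^(j+1) = (1 - a*d) * a^(j+1) := by
    intro j
    induction j with
    | zero => rw [pow_one, pow_one]; noncomm_ring
    | succ j ih =>
      calc (a - a*d*a)^(j+1+1) = (a - a*d*a)^(j+1) * (a - a*d*a) := pow_succ _ _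
        _ = ((1 - a*d) * a^(j+1)) * ((1 - a*d) * a) := by
              rw [ih]; congr 1; noncomm_ring
        _ = (1 - a*d) * ((a^(j+1) * (1 - a*d)) * a) := by simp only [mul_assoc]
        _ = (1 - a*d) * (((1 - a*d) * a^(j+1)) * a) := by rw [hcommSub (j+1)]
        _ = ((1 - a*d) * (1 - a*d)) * (a^(j+1) * a) := by simp only [mul_assoc]
        _ = (1 - a*d) * a^(j+1+1) := by rw [hone, ← pow_succ]
  -- A1 : c = (a c)(a c)
  have A1 : c = (a*c)*(a*c) := by
    have := aux_zero (c - (a*c)*(a*c)) (fun n => a^n - a*c*a^(n+1)) (fun n => c^(n+1))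
      ‖c‖ ‖c‖ (norm_nonneg c) (norm_nonneg c) hc3 ?_ ?_
    · exact sub_eq_zero.mp this
    · intro n hn
      have h1 : a^(n+1) * c^(n+1) = a*c := by
        calc a^(n+1) * c^(n+1) = (a * a^n) * c^(n+1) := by rw [pow_succ' a n]
          _ = a * (a^n * c^(n+1)) := by rw [mul_assoc]
          _ = a * c := by rw [hacj n]
      calc c - (a*c)*(a*c) = a^n * c^(n+1) - (a*c)*(a^(n+1)*c^(n+1)) := by
            rw [hacj n, h1]
        _ = (a^n - a*c*a^(n+1)) * c^(n+1) := by rw [sub_mul]; simp only [mul_assoc]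
    · intro n hn
      calc ‖c^(n+1)‖ ≤ ‖c‖^(n+1) := norm_pow_le' c (Nat.succ_pos n)
        _ = ‖c‖ * ‖c‖^n := by rw [pow_succ']
  -- A2 : d = (a c)(a d)
  have A2 : d = (a*c)*(a*d) := by
    have := aux_zero (d - (a*c)*(a*d)) (fun n => a^n - a*c*a^(n+1)) (fun n => d^(n+1))
      ‖d‖ ‖d‖ (norm_nonneg d) (norm_nonneg d) hc3 ?_ ?_
    · exact sub_eq_zero.mp this
    · intro n hn
      calc d - (a*c)*(a*d) = a^n * d^(n+1) - (a*c)*(a^(n+1)*d^(n+1)) := by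
            rw [hadj1 n, hadw n]
        _ = (a^n - a*c*a^(n+1)) * d^(n+1) := by rw [sub_mul]; simp only [mul_assoc]
    · intro n hn
      calc ‖d^(n+1)‖ ≤ ‖d‖^(n+1) := norm_pow_le' d (Nat.succ_pos n)
        _ = ‖d‖ * ‖d‖^n := by rw [pow_succ']
  -- A3 : a d = (a c)(a (a d))
  have A3 : a*d = (a*c)*(a*(a*d)) := by
    have := aux_zero ((a*d) - (a*c)*(a*(a*d))) (fun n => a^n - a*c*a^(n+1)) (fun n => d^n)
      (‖d‖+1) ‖d‖ (by positivity) (norm_nonneg d) hc3 ?_ ?_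
    · exact sub_eq_zero.mp this
    · intro n hn
      have h1 : a^(n+1) * d^n = a*(a*d) := by
        calc a^(n+1) * d^n = (a * a^n) * d^n := by rw [pow_succ' a n]
          _ = a * (a^n * d^n) := by rw [mul_assoc]
          _ = a * (a*d) := by rw [hadw1 n hn]
      calc a*d - (a*c)*(a*(a*d)) = a^n * d^n - (a*c)*(a^(n+1)*d^n) := by
            rw [hadw1 n hn, h1]
        _ = (a^n - a*c*a^(n+1)) * d^n := by rw [sub_mul]; simp only [mul_assoc]
    · intro n hn
      calc ‖d^n‖ ≤ ‖d‖^n := norm_pow_le' d hn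
        _ ≤ (‖d‖+1) * ‖d‖^n := by nlinarith [pow_nonneg (norm_nonneg d) n, norm_nonneg d]
  -- S1 : c (a (a d)) = (a c)(a d)
  have S1 : c*(a*(a*d)) = (a*c)*(a*d) := by
    calc c*(a*(a*d)) = ((a*c)*(a*c))*(a*(a*d)) := by rw [← A1]
      _ = (a*c)*((a*c)*(a*(a*d))) := by rw [mul_assoc]
      _ = (a*c)*(a*d) := by rw [← A3]
  -- S2 : c (a d) = (a c)(a d)
  have S2 : c*(a*d) = (a*c)*(a*d) := by
    have h := congrArg (· * (a*(a*d))) hc1'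
    change (a*(c*c))*(a*(a*d)) = c*(a*(a*d)) at h
    -- h : (a*(c*c))*(a*(a*d)) = c*(a*(a*d))
    have hL : (a*(c*c))*(a*(a*d)) = c*(a*d) := by
      calc (a*(c*c))*(a*(a*d)) = a*(c*(c*(a*(a*d)))) := by simp only [mul_assoc]
        _ = a*(c*((a*c)*(a*d))) := by rw [S1]
        _ = ((a*c)*(a*c))*(a*d) := by simp only [mul_assoc]
        _ = c*(a*d) := by rw [← A1]
    rw [hL] at h
    rw [h, S1]

  -- g := a d - (a c)(a d) vanishes
  have S3 : a*d = a*((a*c)*(a*d)) := by rw [← A2]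
  have S4 : a*(a*d - (a*c)*(a*d)) = a*(a*d) - a*d := by rw [mul_sub, ← S3]
  have S5 : (a*c)*(a*(a*d - (a*c)*(a*d))) = a*d - (a*c)*(a*d) := by
    rw [S4, mul_sub, ← A3]
  have S6 : (a*c)*(a*d - (a*c)*(a*d)) = 0 := by
    calc (a*c)*(a*d - (a*c)*(a*d)) = (a*c)*(a*d) - ((a*c)*(a*c))*(a*d) := by
          rw [mul_sub, mul_assoc (a*c) (a*c) (a*d)]
      _ = (a*c)*(a*d) - c*(a*d) := by rw [← A1]
      _ = 0 := by rw [S2, sub_self]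
  have S7 : c*(a*(a*d - (a*c)*(a*d))) = 0 := by
    calc c*(a*(a*d - (a*c)*(a*d)))
        = ((a*c)*(a*c))*(a*(a*d - (a*c)*(a*d))) := by rw [← A1]
      _ = (a*c)*((a*c)*(a*(a*d - (a*c)*(a*d)))) := by rw [mul_assoc]
      _ = (a*c)*(a*d - (a*c)*(a*d)) := by rw [S5]
      _ = 0 := S6
  have S8 : a*d - (a*c)*(a*d) = 0 := by
    calc a*d - (a*c)*(a*d) = (a*c)*(a*(a*d - (a*c)*(a*d))) := S5.symm
      _ = a*(c*(a*(a*d - (a*c)*(a*d)))) := by rw [mul_assoc]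
      _ = a*(0:A) := by rw [S7]
      _ = 0 := mul_zero _
  have S9 : (a*c)*(a*d) = a*d := (sub_eq_zero.mp S8).symm
  have S10 : a*(a*d) = a*d := by
    have h : a*(a*d) - a*d = 0 := by rw [← S4, S8, mul_zero]
    exact sub_eq_zero.mp h
  have S11 : (a*d)*a = a*d := by rw [hcomm, S10]
  have S12 : c*(a*d) = a*d := by rw [S2, S9]
  have hq3 : Filter.Tendsto (fun n : ℕ => ‖(a - a*d*a)^n‖ ^ ((1:ℝ)/n))
      Filter.atTop (nhds 0) := hd3
  -- A4 : (a d)(a c) = a c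
  have hqc : (a - a*d*a)*c = a*c - (a*d)*(a*c) := by
    calc (a - a*d*a)*c = a*c - a*d*a*c := by rw [sub_mul]
      _ = a*c - (a*d)*(a*c) := by rw [mul_assoc (a*d) a c]
  have hqe0 : (a - a*d*a)*(a*d) = 0 := by
    rw [show a*d*a = a*d from S11, sub_mul, S10, he, sub_self]
  have hsplit : a*c = (a*d)*(a*c) + (a*c - (a*d)*(a*c)) := by abel
  have hqac : (a - a*d*a)*(a*c) = (a - a*d*a)*(a*c - (a*d)*(a*c)) := by
    calc (a - a*d*a)*(a*c)
        = (a - a*d*a)*((a*d)*(a*c) + (a*c - (a*d)*(a*c))) := by rw [← hsplit]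
      _ = (a - a*d*a)*((a*d)*(a*c)) + (a - a*d*a)*(a*c - (a*d)*(a*c)) := by rw [mul_add]
      _ = ((a - a*d*a)*(a*d))*(a*c) + (a - a*d*a)*(a*c - (a*d)*(a*c)) := by
          rw [← mul_assoc]
      _ = (a - a*d*a)*(a*c - (a*d)*(a*c)) := by rw [hqe0, zero_mul, zero_add]
  have hk1 : a*c - (a*d)*(a*c) = (a - a*d*a)*((a*c - (a*d)*(a*c))*(a*c)) := by
    calc a*c - (a*d)*(a*c) = (a - a*d*a)*c := hqc.symm
      _ = (a - a*d*a)*((a*c)*(a*c)) := congrArg (fun t => (a - a*d*a)*t) A1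
      _ = ((a - a*d*a)*(a*c))*(a*c) := by rw [← mul_assoc]
      _ = ((a - a*d*a)*(a*c - (a*d)*(a*c)))*(a*c) := by rw [hqac]
      _ = (a - a*d*a)*((a*c - (a*d)*(a*c))*(a*c)) := by rw [mul_assoc]
  have hkj : ∀ j : ℕ, a*c - (a*d)*(a*c)
      = (a - a*d*a)^j * ((a*c - (a*d)*(a*c)) * (a*c)^j) := by
    intro j
    induction j with
    | zero => simp
    | succ j ih =>
      calc a*c - (a*d)*(a*c)
          = (a - a*d*a)^j * ((a*c - (a*d)*(a*c)) * (a*c)^j) := ih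
        _ = (a - a*d*a)^j * (((a - a*d*a)*((a*c - (a*d)*(a*c))*(a*c))) * (a*c)^j) := by
            rw [← hk1]
        _ = ((a - a*d*a)^j * (a - a*d*a)) * ((a*c - (a*d)*(a*c)) * ((a*c)*(a*c)^j)) := by
            simp only [mul_assoc]
        _ = (a - a*d*a)^(j+1) * ((a*c - (a*d)*(a*c)) * (a*c)^(j+1)) := by
            rw [← pow_succ, ← pow_succ']
  have A4 : a*c - (a*d)*(a*c) = 0 := by
    apply aux_zero (a*c - (a*d)*(a*c)) (fun n => (a - a*d*a)^n)
      (fun n => (a*c - (a*d)*(a*c)) * (a*c)^n) ‖a*c - (a*d)*(a*c)‖ ‖a*c‖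
      (norm_nonneg _) (norm_nonneg _) hq3
    · intro n hn
      exact hkj n
    · intro n hn
      calc ‖(a*c - (a*d)*(a*c)) * (a*c)^n‖
          ≤ ‖a*c - (a*d)*(a*c)‖ * ‖(a*c)^n‖ := norm_mul_le _ _
        _ ≤ ‖a*c - (a*d)*(a*c)‖ * ‖a*c‖^n :=
            mul_le_mul_of_nonneg_left (norm_pow_le' _ hn) (norm_nonneg _)
  have S14 : (a*d)*(a*c) = a*c := (sub_eq_zero.mp A4).symm
  have S15 : (a*d)*c = c := by
    calc (a*d)*c = (a*d)*((a*c)*(a*c)) := congrArg (fun t => (a*d)*t) A1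
      _ = ((a*d)*(a*c))*(a*c) := by rw [← mul_assoc]
      _ = (a*c)*(a*c) := by rw [S14]
      _ = c := A1.symm
  have S16 : star c = c := by
    have h := congrArg star A1
    rw [star_mul, hc2] at h
    rw [← A1] at h
    exact h
  have hcancel : ∀ t : A, (a*d)*t = t → star (a*d) * t = 0 → t = 0 := by
    intro t ht h0
    have h1 : c*t = t := by
      calc c*t = c*((a*d)*t) := by rw [ht]
        _ = (c*(a*d))*t := by rw [← mul_assoc]
        _ = (a*d)*t := by rw [S12]
        _ = t := ht
    have h2 : star c = star c * star (a*d) := by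
      have h3 := congrArg star S15
      rw [star_mul] at h3
      exact h3.symm
    calc t = c*t := h1.symm
      _ = star c * t := by rw [S16]
      _ = (star c * star (a*d)) * t := by rw [← h2]
      _ = star c * (star (a*d) * t) := by rw [mul_assoc]
      _ = star c * 0 := by rw [h0]
      _ = 0 := mul_zero _
  have hw2' : star (a*d) * (a^(m+1) * w) = star (a*d) * a^m := by
    simpa only [mul_assoc] using hw2
  intro x
  constructor
  · intro hx
    have hx' : star (a*d) * (a^(m+1) * x) = star (a*d) * (a^m * b) := by
      simpa only [mul_assoc] using hx
    refine ⟨x - w*b, ?_⟩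
    set z := x - w*b with hzdef
    have hz : star (a*d) * (a^(m+1) * z) = 0 := by
      calc star (a*d) * (a^(m+1) * z)
          = star (a*d) * (a^(m+1) * x) - star (a*d) * (a^(m+1) * (w*b)) := by
            rw [hzdef, mul_sub, mul_sub]
        _ = star (a*d) * (a^m * b) - star (a*d) * ((a^(m+1) * w) * b) := by
            rw [hx', ← mul_assoc (a^(m+1)) w b]
        _ = star (a*d) * (a^m * b) - (star (a*d) * (a^(m+1) * w)) * b := by
            rw [← mul_assoc (star (a*d)) (a^(m+1) * w) b]
        _ = star (a*d) * (a^m * b) - (star (a*d) * a^m) * b := by rw [hw2']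
        _ = 0 := by rw [← mul_assoc, sub_self]
    set v := w*(a*z) with hvdef
    have hv : a*(w*v) = v := by
      rw [hvdef]
      calc a*(w*(w*(a*z))) = (a*(w*w))*(a*z) := by simp only [mul_assoc]
        _ = w*(a*z) := by rw [← hw1']
    have hv2 : star (a*d) * (a^(m+1) * v) = 0 := by
      calc star (a*d) * (a^(m+1) * v)
          = star (a*d) * (a^(m+1) * (w * (a*z))) := by rw [hvdef]
        _ = (star (a*d) * (a^(m+1) * w)) * (a*z) := by simp only [mul_assoc]
        _ = (star (a*d) * a^m) * (a*z) := by rw [hw2']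
        _ = star (a*d) * (a^(m+1) * z) := by
            rw [pow_succ a m]; simp only [mul_assoc]
        _ = 0 := hz
    have hev : (a*d)*v = v := by
      have h : v - (a*d)*v = 0 := by
        apply aux_zero (v - (a*d)*v) (fun n => (a - a*d*a)^n) (fun n => w^n * v)
          ‖v‖ ‖w‖ (norm_nonneg v) (norm_nonneg w) hq3
        · intro n hn
          have h1 : a^n * (w^n * v) = v := by
            calc a^n * (w^n * v) = (a^n * w^n) * v := by rw [← mul_assoc]
              _ = (a*w)*v := by rw [haww1 n hn]
              _ = a*(w*v) := by rw [mul_assoc]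
              _ = v := hv
          obtain ⟨j, rfl⟩ : ∃ j, n = j+1 := ⟨n-1, (Nat.succ_pred_eq_of_pos hn).symm⟩
          calc v - (a*d)*v
              = a^(j+1) * (w^(j+1) * v) - (a*d)*(a^(j+1) * (w^(j+1) * v)) := by rw [h1]
            _ = (a^(j+1) - (a*d)*a^(j+1)) * (w^(j+1)*v) := by
                rw [sub_mul]; simp only [mul_assoc]
            _ = ((1 - a*d) * a^(j+1)) * (w^(j+1)*v) := by
                congr 1; rw [sub_mul, one_mul]
            _ = (a - a*d*a)^(j+1) * (w^(j+1)*v) := by rw [hqj j]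
        · intro n hn
          calc ‖w^n * v‖ ≤ ‖w^n‖ * ‖v‖ := norm_mul_le _ _
            _ ≤ ‖w‖^n * ‖v‖ :=
                mul_le_mul_of_nonneg_right (norm_pow_le' w hn) (norm_nonneg v)
            _ = ‖v‖ * ‖w‖^n := mul_comm _ _
      exact (sub_eq_zero.mp h).symm
    have hkill : ∀ j : ℕ, a^j * v = 0 → v = 0 := by
      intro j
      induction j with
      | zero => intro h; simpa using h
      | succ j ih =>
        intro h
        apply ih
        have h1 : (a*d)*(a^j*v) = a^j*v := by
          calc (a*d)*(a^j*v) = ((a*d)*a^j)*v := by rw [← mul_assoc]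
            _ = (a^j*(a*d))*v := by rw [← hcommPow j]
            _ = a^j*((a*d)*v) := by rw [mul_assoc]
            _ = a^j*v := by rw [hev]
        have h2 : a*(a^j*v) = 0 := by
          calc a*(a^j*v) = (a*a^j)*v := by rw [← mul_assoc]
            _ = a^(j+1)*v := by rw [← pow_succ']
            _ = 0 := h
        calc a^j*v = (a*d)*(a^j*v) := h1.symm
          _ = ((a*c)*(a*(a*d)))*(a^j*v) := by rw [← A3]
          _ = (a*c)*(a*((a*d)*(a^j*v))) := by simp only [mul_assoc]
          _ = (a*c)*(a*(a^j*v)) := by rw [h1]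
          _ = (a*c)*(0:A) := by rw [h2]
          _ = 0 := mul_zero _
    have hv0 : v = 0 := by
      apply hkill (m+1)
      apply hcancel
      · calc (a*d)*(a^(m+1)*v) = ((a*d)*a^(m+1))*v := by rw [← mul_assoc]
          _ = (a^(m+1)*(a*d))*v := by rw [← hcommPow (m+1)]
          _ = a^(m+1)*((a*d)*v) := by rw [mul_assoc]
          _ = a^(m+1)*v := by rw [hev]
      · exact hv2
    have hfin : (1 - w*a)*z = z := by
      rw [sub_mul, one_mul, mul_assoc, ← hvdef, hv0, sub_zero]
    rw [hfin, hzdef]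
    abel
  · rintro ⟨y, rfl⟩
    have hsub : (1 - w*a)*y = y - w*(a*y) := by rw [sub_mul, one_mul, mul_assoc]
    have hkey : (star (a*d) * a^m) * (a*y) = star (a*d) * (a^(m+1) * y) := by
      simp only [pow_succ, mul_assoc]
    calc star (a*d) * a^(m+1) * (w*b + (1 - w*a)*y)
        = star (a*d) * (a^(m+1) * (w*b + (y - w*(a*y)))) := by rw [hsub, mul_assoc]
      _ = star (a*d) * (a^(m+1) * (w*b)) + star (a*d) * (a^(m+1) * (y - w*(a*y))) := by
          rw [mul_add, mul_add]
      _ = (star (a*d) * (a^(m+1) * w)) * b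
          + (star (a*d) * (a^(m+1) * y) - (star (a*d) * (a^(m+1) * w)) * (a*y)) := by
          rw [mul_sub, mul_sub]; simp only [mul_assoc]
      _ = (star (a*d) * a^m) * b
          + (star (a*d) * (a^(m+1) * y) - (star (a*d) * a^m) * (a*y)) := by rw [hw2']
      _ = (star (a*d) * a^m) * b
          + (star (a*d) * (a^(m+1) * y) - star (a*d) * (a^(m+1) * y)) := by rw [hkey]
      _ = star (a*d) * a^m * b := by rw [sub_self, add_zero]
end

section
/- Uniqueness of constrained solutions: let a ∈ A have a generalized right core inverse and let w = a_r^{g_m}. If x1 and x2 both solve (a a_r^d)^* a^{m+1} x = (a a_r^d)^* a^m b and both lie in the left ideal w·A (i.e. x_i = w z_i for some z_i), then x1 = x2 = w b. -/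
open Filter

lemma aux_kill {A : Type*} [NormedRing A] (g : ℕ → A)
    (hg : Tendsto (fun n : ℕ => ‖g n‖ ^ ((1 : ℝ) / n)) atTop (nhds 0))
    (X : A) (M : ℝ) (hM : 1 ≤ M) (N0 : ℕ)
    (hX : ∀ n : ℕ, N0 ≤ n → ‖X‖ ≤ ‖g n‖ * M ^ (n + 1)) : X = 0 := by
  have hM0 : 0 < M := lt_of_lt_of_le one_pos hM
  have hδ : (0:ℝ) < (2 * M)⁻¹ := by positivity
  have hδM : (2 * M)⁻¹ * M = 1 / 2 := by field_simp
  have hev : ∀ᶠ n : ℕ in atTop, ‖g n‖ ^ ((1 : ℝ) / n) < (2*M)⁻¹ :=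
    hg.eventually (gt_mem_nhds hδ)
  obtain ⟨N1, hN1⟩ := eventually_atTop.mp hev
  have key : ∀ n : ℕ, max (max N0 N1) 1 ≤ n → ‖X‖ ≤ M * (1/2 : ℝ) ^ n := by
    intro n hn
    have hn0 : N0 ≤ n := le_trans (le_trans (le_max_left _ _) (le_max_left _ _)) hn
    have hn1 : N1 ≤ n := le_trans (le_trans (le_max_right _ _) (le_max_left _ _)) hn
    have hnp : 1 ≤ n := le_trans (le_max_right _ _) hn
    have hg' : ‖g n‖ < ((2*M)⁻¹) ^ n := by
      have h1 := hN1 n hn1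
      have hnn : (n : ℝ) ≠ 0 := by positivity
      have hgeq : ‖g n‖ = (‖g n‖ ^ ((1:ℝ)/n)) ^ n := by
        rw [← Real.rpow_natCast (‖g n‖ ^ ((1:ℝ)/n)) n, ← Real.rpow_mul (norm_nonneg _),
          one_div, inv_mul_cancel₀ hnn, Real.rpow_one]
      rw [hgeq]
      exact pow_lt_pow_left₀ h1 (Real.rpow_nonneg (norm_nonneg _) _) (by omega)
    calc ‖X‖ ≤ ‖g n‖ * M ^ (n+1) := hX n hn0
      _ ≤ ((2*M)⁻¹) ^ n * M ^ (n+1) := by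
          apply mul_le_mul_of_nonneg_right (le_of_lt hg') (by positivity)
      _ = M * ((2*M)⁻¹ * M) ^ n := by rw [mul_pow]; ring
      _ = M * (1/2 : ℝ) ^ n := by rw [hδM]
  have hlim : Tendsto (fun n : ℕ => M * (1/2 : ℝ) ^ n) atTop (nhds 0) := by
    simpa using (tendsto_pow_atTop_nhds_zero_of_lt_one (by norm_num : (0:ℝ) ≤ 1/2)
      (by norm_num)).const_mul M
  have hle : ‖X‖ ≤ 0 := ge_of_tendsto hlim (eventually_atTop.mpr ⟨_, key⟩)
  exact norm_le_zero_iff.mp hle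

lemma pow_mul_w {A : Type*} [Ring A] {a w : A} (hw1 : w = a * w ^ 2) :
    ∀ n : ℕ, a ^ n * w ^ (n + 1) = w
  | 0 => by simp
  | n + 1 => by
      have ih := pow_mul_w hw1 n
      calc a ^ (n + 1) * w ^ (n + 2)
          = a ^ n * (a * w ^ 2 * w ^ n) := by
            rw [pow_succ a n, show w ^ (n+2) = w ^ 2 * w ^ n by rw [← pow_add, Nat.add_comm]]
            simp only [mul_assoc]
        _ = a ^ n * (w * w ^ n) := by rw [← hw1]
        _ = w := by rw [← pow_succ']; exact ih

lemma pow_ad {A : Type*} [Ring A] {a d : A} (h2 : a ^ 2 * d = a * d * a) :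
    ∀ n : ℕ, a ^ (n + 1) * d = a * d * a ^ n
  | 0 => by simp
  | n + 1 => by
      have ih := pow_ad h2 n
      calc a ^ (n + 2) * d = a * (a ^ (n + 1) * d) := by
            rw [pow_succ']; simp only [mul_assoc]
        _ = a * (a * d * a ^ n) := by rw [ih]
        _ = a ^ 2 * d * a ^ n := by rw [sq]; simp only [mul_assoc]
        _ = a * d * a ^ (n + 1) := by rw [h2, pow_succ']; simp only [mul_assoc]

lemma pow_q {A : Type*} [Ring A] {a d : A} (hd1 : a * d ^ 2 = d)
    (h2 : a ^ 2 * d = a * d * a) :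
    ∀ n : ℕ, (a - a * d * a) ^ (n + 1) = a ^ (n + 1) - a * d * a ^ (n + 1)
  | 0 => by simp
  | n + 1 => by
      have ih := pow_q hd1 h2 n
      have hE : a * d * (a * d) = a * d := by
        have e1 : a * d * (a * d) = a ^ 2 * d * d := by
          rw [h2]; simp only [mul_assoc]
        rw [e1, show a ^ 2 * d * d = a * (a * d ^ 2) by simp only [sq, mul_assoc], hd1]
      have hta : a ^ (n + 1) * (a * d * a) = a * d * a ^ (n + 2) := by
        calc a ^ (n + 1) * (a * d * a) = a ^ (n + 2) * d * a := by
              simp only [pow_succ, mul_assoc]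
          _ = a * d * a ^ (n + 1) * a := by rw [pow_ad h2 (n + 1)]
          _ = a * d * a ^ (n + 2) := by simp only [pow_succ, mul_assoc]
      have htb : a * d * a ^ (n + 1) * (a * d * a) = a * d * a ^ (n + 2) := by
        calc a * d * a ^ (n + 1) * (a * d * a)
            = a * d * (a ^ (n + 1) * (a * d * a)) := by simp only [mul_assoc]
          _ = a * d * (a * d * a ^ (n + 2)) := by rw [hta]
          _ = a * d * (a * d) * a ^ (n + 2) := by simp only [mul_assoc]
          _ = a * d * a ^ (n + 2) := by rw [hE]
      calc (a - a * d * a) ^ (n + 2)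
          = (a - a * d * a) ^ (n + 1) * (a - a * d * a) := pow_succ _ _
        _ = (a ^ (n + 1) - a * d * a ^ (n + 1)) * (a - a * d * a) := by rw [ih]
        _ = a ^ (n + 1) * a - a ^ (n + 1) * (a * d * a)
            - (a * d * a ^ (n + 1) * a - a * d * a ^ (n + 1) * (a * d * a)) := by
            rw [sub_mul, mul_sub, mul_sub]
        _ = a ^ (n + 2) - a * d * a ^ (n + 2)
            - (a * d * a ^ (n + 2) - a * d * a ^ (n + 2)) := by
            rw [hta, htb, ← pow_succ, show a * d * a ^ (n+1) * a = a * d * a ^ (n+2) by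
              simp only [pow_succ, mul_assoc]]
        _ = a ^ (n + 2) - a * d * a ^ (n + 2) := by rw [sub_self, sub_zero]

private theorem mgrgi_unique_sol_aux {A : Type*} [NormedRing A] [NormedAlgebra ℂ A] [CompleteSpace A]
    [StarRing A] (hproper : ∀ z : A, star z * z = 0 → z = 0)
    (a b c d w x1 x2 z1 z2 : A) (m : ℕ) (hm : 1 ≤ m)
    (hc : a * c ^ 2 = c ∧ star (a * c) = a * c ∧
      Filter.Tendsto (fun n : ℕ => ‖a ^ n - a * c * a ^ (n + 1)‖ ^ ((1 : ℝ) / n))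
        Filter.atTop (nhds 0))
    (hd : a * d ^ 2 = d ∧ a ^ 2 * d = a * d * a ∧
      Filter.Tendsto (fun n : ℕ => ‖(a - a * d * a) ^ n‖ ^ ((1 : ℝ) / n))
        Filter.atTop (nhds 0))
    (hw : w = a * w ^ 2 ∧ star (a * d) * a ^ (m + 1) * w = star (a * d) * a ^ m ∧
      Filter.Tendsto (fun n : ℕ => ‖a ^ n - a * w * a ^ n‖ ^ ((1 : ℝ) / n))
        Filter.atTop (nhds 0))
    (h1 : star (a * d) * a ^ (m + 1) * x1 = star (a * d) * a ^ m * b)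
    (h2 : star (a * d) * a ^ (m + 1) * x2 = star (a * d) * a ^ m * b)
    (hz1 : x1 = w * z1) (hz2 : x2 = w * z2) :
    x1 = w * b ∧ x2 = w * b := by
  obtain ⟨hw1, hw2, _⟩ := hw
  obtain ⟨hd1, hd2, hd3⟩ := hd
  obtain ⟨hc1, _, hc3⟩ := hc
  have hpw := pow_mul_w hw1
  have hMw : (1:ℝ) ≤ ‖w‖ + 1 := by linarith [norm_nonneg w]
  -- bound helper
  have hbound : ∀ (u : A) (i j : ℕ), i ≤ j → ‖u * w ^ (i + 1)‖ ≤ ‖u‖ * (‖w‖ + 1) ^ (j + 1) := by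
    intro u i j hij
    calc ‖u * w ^ (i+1)‖ ≤ ‖u‖ * ‖w ^ (i+1)‖ := norm_mul_le _ _
      _ ≤ ‖u‖ * (‖w‖ + 1) ^ (j + 1) := by
          apply mul_le_mul_of_nonneg_left ?_ (norm_nonneg _)
          calc ‖w ^ (i+1)‖ ≤ ‖w‖ ^ (i+1) := norm_pow_le' w (Nat.succ_pos i)
            _ ≤ (‖w‖ + 1) ^ (i+1) := by
                apply pow_le_pow_left₀ (norm_nonneg w) (by linarith) _
            _ ≤ (‖w‖ + 1) ^ (j+1) := by
                apply pow_le_pow_right₀ hMw (by omega)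
  -- L1 : a^(k+1) * w is fixed by left mult by a*d
  have L1 : ∀ k : ℕ, a ^ (k + 1) * w = a * d * (a ^ (k + 1) * w) := by
    intro k
    have hident : ∀ j : ℕ,
        a ^ (k+1) * w - a * d * (a ^ (k+1) * w) = (a - a * d * a) ^ (k + 1 + j) * w ^ (j + 1) := by
      intro j
      have e1 : a ^ (k + 1 + j) * w ^ (j + 1) = a ^ (k + 1) * w := by
        rw [pow_add, mul_assoc, hpw j]
      rw [show k + 1 + j = (k + j) + 1 by omega, pow_q hd1 hd2 (k + j), sub_mul,
        show (k + j) + 1 = k + 1 + j by omega]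
      simp only [mul_assoc]
      rw [e1]
    refine sub_eq_zero.mp (aux_kill (fun n => (a - a * d * a) ^ n) hd3 _ (‖w‖ + 1) hMw (k + 1) ?_)
    intro n hn
    obtain ⟨j, rfl⟩ : ∃ j, n = k + 1 + j := ⟨n - (k + 1), by omega⟩
    rw [hident j]
    exact hbound _ j (k + 1 + j) (by omega)
  -- L2 : a^k * w = a*c*(a^(k+1) * w)
  have L2 : ∀ k : ℕ, a ^ k * w = a * c * (a ^ (k + 1) * w) := by
    intro k
    have hident : ∀ j : ℕ,
        a ^ k * w - a * c * (a ^ (k + 1) * w)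
          = (a ^ (k + j) - a * c * a ^ (k + j + 1)) * w ^ (j + 1) := by
      intro j
      have e1 : a ^ (k + j) * w ^ (j + 1) = a ^ k * w := by
        rw [pow_add, mul_assoc, hpw j]
      have e2 : a ^ (k + j + 1) * w ^ (j + 1) = a ^ (k + 1) * w := by
        rw [show k + j + 1 = (k + 1) + j by omega, pow_add, mul_assoc, hpw j]
      rw [sub_mul]
      simp only [mul_assoc]
      rw [e1, e2]
    refine sub_eq_zero.mp (aux_kill (fun n => a ^ n - a * c * a ^ (n + 1)) hc3 _
      (‖w‖ + 1) hMw k ?_)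
    intro n hn
    obtain ⟨j, rfl⟩ : ∃ j, n = k + j := ⟨n - k, by omega⟩
    rw [hident j]
    exact hbound _ j (k + j) (by omega)
  -- general solver
  suffices key : ∀ x z : A, star (a * d) * a ^ (m + 1) * x = star (a * d) * a ^ m * b →
      x = w * z → x = w * b by
    exact ⟨key x1 z1 h1 hz1, key x2 z2 h2 hz2⟩
  intro x z hx hxz
  have hyw : x - w * b = w * (z - b) := by rw [hxz, mul_sub]
  have hstar : star (a * d) * (a ^ (m + 1) * (w * (z - b))) = 0 := by
    have hb : star (a * d) * a ^ (m + 1) * (w * b) = star (a * d) * a ^ m * b := by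
      rw [← mul_assoc, hw2]
    calc star (a * d) * (a ^ (m + 1) * (w * (z - b)))
        = star (a * d) * a ^ (m + 1) * (x - w * b) := by rw [hyw]; simp only [mul_assoc]
      _ = star (a * d) * a ^ (m + 1) * x - star (a * d) * a ^ (m + 1) * (w * b) := mul_sub _ _ _
      _ = 0 := by rw [hx, hb, sub_self]
  have hY : a ^ (m + 1) * (w * (z - b)) = a * d * (a ^ (m + 1) * (w * (z - b))) := by
    calc a ^ (m + 1) * (w * (z - b)) = a ^ (m + 1) * w * (z - b) := by rw [mul_assoc]
      _ = a * d * (a ^ (m + 1) * w) * (z - b) := by rw [← L1 m]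
      _ = a * d * (a ^ (m + 1) * (w * (z - b))) := by simp only [mul_assoc]
  have hY0 : a ^ (m + 1) * (w * (z - b)) = 0 := by
    apply hproper
    calc star (a ^ (m + 1) * (w * (z - b))) * (a ^ (m + 1) * (w * (z - b)))
        = star (a * d * (a ^ (m + 1) * (w * (z - b)))) * (a ^ (m + 1) * (w * (z - b))) := by
          rw [← hY]
      _ = star (a ^ (m + 1) * (w * (z - b))) *
            (star (a * d) * (a ^ (m + 1) * (w * (z - b)))) := by
          rw [star_mul, mul_assoc]
      _ = 0 := by rw [hstar, mul_zero]
  have hdown : ∀ k : ℕ, a ^ (k + 1) * (w * (z - b)) = 0 → a ^ k * (w * (z - b)) = 0 := by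
    intro k h
    calc a ^ k * (w * (z - b)) = a ^ k * w * (z - b) := by rw [mul_assoc]
      _ = a * c * (a ^ (k + 1) * w) * (z - b) := by rw [L2 k]
      _ = a * c * (a ^ (k + 1) * (w * (z - b))) := by simp only [mul_assoc]
      _ = 0 := by rw [h, mul_zero]
  have hzero : ∀ k : ℕ, a ^ k * (w * (z - b)) = 0 → w * (z - b) = 0 := by
    intro k
    induction k with
    | zero => intro h; simpa using h
    | succ k ih => intro h; exact ih (hdown k h)
  have hy0 : x - w * b = 0 := by rw [hyw]; exact hzero (m + 1) hY0
  exact sub_eq_zero.mp hy0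

theorem mgrgi_unique_sol {A : Type*} [NormedRing A] [NormedAlgebra ℂ A] [CompleteSpace A]
    [StarRing A] (hproper : ∀ z : A, star z * z = 0 → z = 0)
    (a b c d w x1 x2 z1 z2 : A) (m : ℕ) (hm : 1 ≤ m)
    (hc : IsGRCore a c) (hd : IsGRD a d) (hw : IsMGRGI m a d w)
    (h1 : star (a * d) * a ^ (m + 1) * x1 = star (a * d) * a ^ m * b)
    (h2 : star (a * d) * a ^ (m + 1) * x2 = star (a * d) * a ^ m * b)
    (hz1 : x1 = w * z1) (hz2 : x2 = w * z2) :
    x1 = w * b ∧ x2 = w * b := by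
  unfold IsGRCore at hc
  unfold IsGRD Quasinilpotent at hd
  unfold IsMGRGI at hw
  exact mgrgi_unique_sol_aux hproper a b c d w x1 x2 z1 z2 m hm hc hd hw h1 h2 hz1 hz2
end

section
/- If a ∈ A is regular with inner inverse a^- (a = a a^- a) and a has a generalized right Drazin inverse a_r^d, then a_r^d a a^- is a generalized right Drazin inverse of a^2 a^-, i.e. (a^2 a^-)(a_r^d a a^-)^2 = a_r^d a a^-, (a^2 a^-)(a_r^d a a^-)(a^2 a^-) = (a^2 a^-)^2 (a_r^d a a^-), and a^2 a^- − (a^2 a^-)(a_r^d a a^-)(a^2 a^-) is quasinilpotent. -/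
theorem quasi_aux {A : Type*} [NormedRing A] {q p : A} (hq : Quasinilpotent q)
    (hpq : p * q = q) : Quasinilpotent (q * p) := by
  have key : ∀ n : ℕ, (q * p) ^ (n + 1) = q ^ (n + 1) * p := by
    intro n
    induction n with
    | zero => simp
    | succ n ih =>
      rw [pow_succ, ih, mul_assoc (q ^ (n+1)) p (q*p), ← mul_assoc p q p, hpq,
        ← mul_assoc, ← pow_succ]
  set c : ℝ := max ‖p‖ 1 with hcdef
  have hc0 : (0:ℝ) < c := lt_of_lt_of_le one_pos (le_max_right _ _)
  have tendc : Filter.Tendsto (fun n : ℕ => c ^ ((1:ℝ)/n)) Filter.atTop (nhds 1) := by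
    have h1 : Filter.Tendsto (fun n : ℕ => (1:ℝ)/n) Filter.atTop (nhds 0) :=
      tendsto_one_div_atTop_nhds_zero_nat
    have := (Filter.Tendsto.rpow (tendsto_const_nhds (x := c)) h1 (Or.inl (ne_of_gt hc0)))
    simpa using this
  have tendg : Filter.Tendsto (fun n : ℕ => ‖q ^ n‖ ^ ((1:ℝ)/n) * c ^ ((1:ℝ)/n))
      Filter.atTop (nhds 0) := by
    have := hq.mul tendc
    simpa using this
  apply squeeze_zero' (f := fun n : ℕ => ‖(q*p) ^ n‖ ^ ((1:ℝ)/n))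
    (g := fun n : ℕ => ‖q ^ n‖ ^ ((1:ℝ)/n) * c ^ ((1:ℝ)/n))
  · exact Filter.Eventually.of_forall fun n => Real.rpow_nonneg (norm_nonneg _) _
  · filter_upwards [Filter.eventually_ge_atTop 1] with n hn
    obtain ⟨m, rfl⟩ := Nat.exists_eq_add_of_le hn
    rw [add_comm 1 m, key]
    push_cast
    calc ‖q ^ (m+1) * p‖ ^ ((1:ℝ)/(m+1))
        ≤ (‖q ^ (m+1)‖ * c) ^ ((1:ℝ)/(m+1)) := by
          apply Real.rpow_le_rpow (norm_nonneg _)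
          · exact le_trans (norm_mul_le _ _)
              (mul_le_mul_of_nonneg_left (le_max_left _ _) (norm_nonneg _))
          · positivity
      _ = ‖q ^ (m+1)‖ ^ ((1:ℝ)/(m+1)) * c ^ ((1:ℝ)/(m+1)) :=
          Real.mul_rpow (norm_nonneg _) (le_of_lt hc0)
  · exact tendg

theorem grd_of_regular {A : Type*} [NormedRing A] [NormedAlgebra ℂ A] [CompleteSpace A]
    (a ai d : A) (hreg : a = a * ai * a)
    (hd1 : a * d ^ 2 = d) (hd2 : a ^ 2 * d = a * d * a)
    (hd3 : Quasinilpotent (a - a * d * a)) :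
    (a ^ 2 * ai) * (d * a * ai) ^ 2 = d * a * ai ∧
    (a ^ 2 * ai) * (d * a * ai) * (a ^ 2 * ai) = (a ^ 2 * ai) ^ 2 * (d * a * ai) ∧
    Quasinilpotent (a ^ 2 * ai - (a ^ 2 * ai) * (d * a * ai) * (a ^ 2 * ai)) := by
  have r2 : ∀ x : A, a * (ai * (a * x)) = a * x := fun x => by
    rw [← mul_assoc, ← mul_assoc, ← hreg]
  have hd1' : a * (d * d) = d := by rw [← pow_two, hd1]
  have hd1'' : ∀ x : A, a * (d * (d * x)) = d * x := fun x => by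
    rw [← mul_assoc d d x, ← mul_assoc a (d*d) x, hd1']
  have r1 : ∀ x : A, a * (ai * (d * x)) = d * x := fun x => by
    conv_lhs => rw [← hd1'' x]
    rw [r2, hd1'']
  have r1' : a * (ai * d) = d := by simpa using r1 1
  have r2' : a * (ai * a) = a := by simpa using r2 1
  have hd2' : ∀ x : A, a * (a * (d * x)) = a * (d * (a * x)) := fun x => by
    have := hd2
    rw [pow_two] at this
    rw [← mul_assoc a d (a*x), ← mul_assoc (a*d) a x, ← this]
    simp only [mul_assoc]
  refine ⟨?_, ?_, ?_⟩
  · simp only [pow_two, mul_assoc, r1, r2, r1', r2', hd1'']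
  · simp only [pow_two, mul_assoc, r1, r2, r1', r2', hd1'', hd2']
  · have e3 : a ^ 2 * ai - (a ^ 2 * ai) * (d * a * ai) * (a ^ 2 * ai)
        = (a - a * d * a) * (a * ai) := by
      simp only [pow_two, mul_assoc, r1, r2, r1', r2', hd1'', hd2', sub_mul]
    rw [e3]
    apply quasi_aux hd3
    rw [mul_sub]
    simp only [mul_assoc, r2, r2']
end
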